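/- arXiv:1512.00938 — 7 statements merged into one kernel-verified Lean document; each statement's English description precedes it below -/
import Mathlib

section
/- Let J and L be directed sets, s : J × L → ℝ a real-valued function, and let ℘ = J × L^J be directed pointwise (i.e., (j,u) ≤ (j',u') iff j ≤ j' and u(k) ≤ u'(k) for all k ∈ J). Define the net (s_i)_{i∈℘} by s_{(j,u)} = s(j, u(j)). Then for every real number r, limsup_{i∈℘} s_i ≤ r if and only if limsup_{j∈J} limsup_{l∈L} s(j,l) ≤ r. -/
open Filter

instance auxPiDirected {ι : Type*} {α : ι → Type*} [∀ i, Preorder (α i)]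
    [∀ i, IsDirected (α i) (· ≤ ·)] : IsDirected (∀ i, α i) (· ≤ ·) :=
  ⟨fun a b => ⟨fun i => (exists_ge_ge (a i) (b i)).choose,
    fun i => (exists_ge_ge (a i) (b i)).choose_spec.1,
    fun i => (exists_ge_ge (a i) (b i)).choose_spec.2⟩⟩

instance auxProdDirected {α β : Type*} [Preorder α] [Preorder β]
    [IsDirected α (· ≤ ·)] [IsDirected β (· ≤ ·)] : IsDirected (α × β) (· ≤ ·) :=
  ⟨fun a b => by
    obtain ⟨c, hc1, hc2⟩ := exists_ge_ge a.1 b.1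
    obtain ⟨d, hd1, hd2⟩ := exists_ge_ge a.2 b.2
    exact ⟨(c, d), ⟨hc1, hd1⟩, ⟨hc2, hd2⟩⟩⟩

/-- Iterated limsup lemma (Lemma `lemma-conv-net`, limsup part): for directed sets `J`, `L`,
a function `s : J × L → ℝ`, and the net on `℘ = J × L^J` (pointwise directed) given by
`s_{(j,u)} = s (j, u j)`, one has `limsup s_i ≤ r ↔ limsup_j limsup_l s (j,l) ≤ r`. -/
theorem stmt0 {J L : Type*} [Preorder J] [Nonempty J] [IsDirected J (· ≤ ·)]
    [Preorder L] [Nonempty L] [IsDirected L (· ≤ ·)]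
    (s : J × L → ℝ) (r : ℝ) :
    limsup (fun i : J × (J → L) => ((s (i.1, i.2 i.1) : ℝ) : EReal)) atTop ≤ (r : EReal) ↔
      limsup (fun j : J => limsup (fun l : L => ((s (j, l) : ℝ) : EReal)) atTop) atTop
        ≤ (r : EReal) := by
  classical
  constructor
  · intro h
    refine le_of_forall_gt_imp_ge_of_dense fun b hb => ?_
    have hlt : limsup (fun i : J × (J → L) => ((s (i.1, i.2 i.1) : ℝ) : EReal)) atTop < b :=
      lt_of_le_of_lt h hb
    have hev := eventually_lt_of_limsup_lt hlt
    rw [eventually_atTop] at hev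
    obtain ⟨⟨j₀, u₀⟩, hp⟩ := hev
    apply limsup_le_of_le (by isBoundedDefault)
    rw [eventually_atTop]
    refine ⟨j₀, fun j hj => ?_⟩
    apply limsup_le_of_le (by isBoundedDefault)
    rw [eventually_atTop]
    refine ⟨u₀ j, fun l hl => ?_⟩
    have := hp (j, Function.update u₀ j l) ⟨hj, fun k => ?_⟩
    · simpa [Function.update_self] using this.le
    · rcases eq_or_ne k j with rfl | hk
      · simpa using hl
      · simp [Function.update_of_ne hk]
  · intro h
    refine le_of_forall_gt_imp_ge_of_dense fun b hb => ?_
    have hlt := lt_of_le_of_lt h hb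
    have hev := eventually_lt_of_limsup_lt hlt
    rw [eventually_atTop] at hev
    obtain ⟨j₀, hj₀⟩ := hev
    have key : ∀ j, j₀ ≤ j → ∃ l₀ : L, ∀ l ≥ l₀, ((s (j, l) : ℝ) : EReal) < b := by
      intro j hj
      have := eventually_lt_of_limsup_lt (hj₀ j hj)
      rwa [eventually_atTop] at this
    set u₀ : J → L := fun j =>
      if hj : j₀ ≤ j then (key j hj).choose else Classical.arbitrary L with hu₀
    apply limsup_le_of_le (by isBoundedDefault)
    rw [eventually_atTop]
    refine ⟨(j₀, u₀), fun p hp => ?_⟩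
    obtain ⟨hj, hu⟩ := hp
    have hj' : j₀ ≤ p.1 := hj
    have hul : u₀ p.1 ≤ p.2 p.1 := hu p.1
    rw [hu₀] at hul
    simp only [dif_pos hj'] at hul
    exact ((key p.1 hj').choose_spec (p.2 p.1) hul).le
end

section
/- Let J and L be directed sets, s : J × L → ℝ, and let ℘ = J × L^J be directed pointwise. Define the net (s_i)_{i∈℘} by s_{(j,u)} = s(j, u(j)). Then for every real number r, the net (s_i) converges to r if and only if liminf_{j} liminf_{l} s(j,l) = limsup_{j} limsup_{l} s(j,l) = r. -/
open Filter Topology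

section aux

variable {J L : Type*}

instance prodIsDirectedLe [Preorder J] [Preorder L] [IsDirected J (· ≤ ·)]
    [IsDirected L (· ≤ ·)] : IsDirected (J × L) (· ≤ ·) := by
  constructor
  rintro ⟨a1, a2⟩ ⟨b1, b2⟩
  obtain ⟨c1, hc1, hc1'⟩ := directed_of (· ≤ ·) a1 b1
  obtain ⟨c2, hc2, hc2'⟩ := directed_of (· ≤ ·) a2 b2
  exact ⟨⟨c1, c2⟩, ⟨hc1, hc2⟩, ⟨hc1', hc2'⟩⟩

instance piIsDirectedLe [Preorder L] [IsDirected L (· ≤ ·)] :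
    IsDirected (J → L) (· ≤ ·) := by
  constructor
  intro a b
  have h : ∀ j, ∃ c, a j ≤ c ∧ b j ≤ c := fun j => directed_of (· ≤ ·) (a j) (b j)
  choose c hc hc' using h
  exact ⟨c, hc, hc'⟩

end aux

/-- Iterated limit lemma (Lemma `lemma-conv-net`, convergence part): the net
`s_{(j,u)} = s (j, u j)` on `℘ = J × L^J` converges to `r` iff
`liminf_j liminf_l s (j,l) = limsup_j limsup_l s (j,l) = r`. -/
theorem stmt1 {J L : Type*} [Preorder J] [Nonempty J] [IsDirected J (· ≤ ·)]
    [Preorder L] [Nonempty L] [IsDirected L (· ≤ ·)]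
    (s : J × L → ℝ) (r : ℝ) :
    Tendsto (fun i : J × (J → L) => s (i.1, i.2 i.1)) atTop (𝓝 r) ↔
      (liminf (fun j : J => liminf (fun l : L => ((s (j, l) : ℝ) : EReal)) atTop) atTop
          = (r : EReal) ∧
        limsup (fun j : J => limsup (fun l : L => ((s (j, l) : ℝ) : EReal)) atTop) atTop
          = (r : EReal)) := by
  classical
  set A : J → EReal := fun j => limsup (fun l : L => ((s (j, l) : ℝ) : EReal)) atTop with hA
  set B : J → EReal := fun j => liminf (fun l : L => ((s (j, l) : ℝ) : EReal)) atTop with hB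
  constructor
  · intro h
    -- limsup_j A j ≤ r
    have hsup : limsup A atTop ≤ (r : EReal) := by
      by_contra hlt
      push_neg at hlt
      obtain ⟨c, hrc, hcs⟩ := EReal.exists_between_coe_real hlt
      have hfr : ∃ᶠ j in atTop, (c : EReal) < A j :=
        frequently_lt_of_lt_limsup (by isBoundedDefault) hcs
      have hev : ∀ᶠ i in (atTop : Filter (J × (J → L))), s (i.1, i.2 i.1) < c :=
        h (Iio_mem_nhds (EReal.coe_lt_coe_iff.1 hrc))
      obtain ⟨⟨j0, u0⟩, hi0⟩ := eventually_atTop.1 hev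
      obtain ⟨j, hj, hcj⟩ := frequently_atTop.1 hfr j0
      have hfl : ∃ᶠ l in (atTop : Filter L), (c : EReal) < (s (j, l) : ℝ) :=
        frequently_lt_of_lt_limsup (by isBoundedDefault) hcj
      obtain ⟨l, hl, hcl⟩ := frequently_atTop.1 hfl (u0 j)
      have hcl' : c < s (j, l) := EReal.coe_lt_coe_iff.1 hcl
      have hle : (j0, u0) ≤ (j, Function.update u0 j l) := by
        refine ⟨hj, fun k => ?_⟩
        rcases eq_or_ne k j with rfl | hk
        · simpa using hl
        · simp [Function.update_of_ne hk]
      have := hi0 _ hle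
      simp only [Function.update_self] at this
      exact absurd (hcl'.trans this) (lt_irrefl c)
    -- r ≤ liminf_j B j
    have hinf : (r : EReal) ≤ liminf B atTop := by
      by_contra hlt
      push_neg at hlt
      obtain ⟨c, hsc, hcr⟩ := EReal.exists_between_coe_real hlt
      have hfr : ∃ᶠ j in atTop, B j < (c : EReal) :=
        frequently_lt_of_liminf_lt (by isBoundedDefault) hsc
      have hev : ∀ᶠ i in (atTop : Filter (J × (J → L))), c < s (i.1, i.2 i.1) :=
        h (Ioi_mem_nhds (EReal.coe_lt_coe_iff.1 hcr))
      obtain ⟨⟨j0, u0⟩, hi0⟩ := eventually_atTop.1 hev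
      obtain ⟨j, hj, hcj⟩ := frequently_atTop.1 hfr j0
      have hfl : ∃ᶠ l in (atTop : Filter L), ((s (j, l) : ℝ) : EReal) < c :=
        frequently_lt_of_liminf_lt (by isBoundedDefault) hcj
      obtain ⟨l, hl, hcl⟩ := frequently_atTop.1 hfl (u0 j)
      have hcl' : s (j, l) < c := EReal.coe_lt_coe_iff.1 hcl
      have hle : (j0, u0) ≤ (j, Function.update u0 j l) := by
        refine ⟨hj, fun k => ?_⟩
        rcases eq_or_ne k j with rfl | hk
        · simpa using hl
        · simp [Function.update_of_ne hk]
      have := hi0 _ hle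
      simp only [Function.update_self] at this
      exact absurd (this.trans hcl') (lt_irrefl c)
    -- chain: liminf B ≤ limsup A
    have hBA : ∀ j, B j ≤ A j := fun j => liminf_le_limsup
    have hchain : liminf B atTop ≤ limsup A atTop :=
      le_trans (liminf_le_liminf (Eventually.of_forall hBA)) liminf_le_limsup
    constructor
    · exact le_antisymm (le_trans hchain hsup) hinf
    · exact le_antisymm hsup (le_trans hinf hchain)
  · rintro ⟨hinf, hsup⟩
    rw [tendsto_order]
    constructor
    · intro b hb
      have hb' : (b : EReal) < liminf B atTop := by rw [hinf]; exact_mod_cast hb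
      have hev : ∀ᶠ j in atTop, (b : EReal) < B j :=
        eventually_lt_of_lt_liminf hb' (by isBoundedDefault)
      obtain ⟨j0, hj0⟩ := eventually_atTop.1 hev
      have H : ∀ j : J, (b : EReal) < B j → ∃ l0 : L, ∀ l ≥ l0, b < s (j, l) := by
        intro j hj
        have : ∀ᶠ l in (atTop : Filter L), (b : EReal) < (s (j, l) : ℝ) :=
          eventually_lt_of_lt_liminf hj (by isBoundedDefault)
        obtain ⟨l0, hl0⟩ := eventually_atTop.1 this
        exact ⟨l0, fun l hl => EReal.coe_lt_coe_iff.1 (hl0 l hl)⟩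
      choose! u hu using H
      refine eventually_atTop.2 ⟨(j0, u), ?_⟩
      rintro ⟨j, f⟩ ⟨hj, hf⟩
      exact hu j (hj0 j hj) (f j) (hf j)
    · intro b hb
      have hb' : limsup A atTop < (b : EReal) := by rw [hsup]; exact_mod_cast hb
      have hev : ∀ᶠ j in atTop, A j < (b : EReal) :=
        eventually_lt_of_limsup_lt hb' (by isBoundedDefault)
      obtain ⟨j0, hj0⟩ := eventually_atTop.1 hev
      have H : ∀ j : J, A j < (b : EReal) → ∃ l0 : L, ∀ l ≥ l0, s (j, l) < b := by
        intro j hj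
        have : ∀ᶠ l in (atTop : Filter L), ((s (j, l) : ℝ) : EReal) < b :=
          eventually_lt_of_limsup_lt hj (by isBoundedDefault)
        obtain ⟨l0, hl0⟩ := eventually_atTop.1 this
        exact ⟨l0, fun l hl => EReal.coe_lt_coe_iff.1 (hl0 l hl)⟩
      choose! u hu using H
      refine eventually_atTop.2 ⟨(j0, u), ?_⟩
      rintro ⟨j, f⟩ ⟨hj, hf⟩
      exact hu j (hj0 j hj) (f j) (hf j)
end

section
/- In the setting where P^τ(g) = sup_{μ ∈ M^τ(Ω)} (μ(g) + h^τ(μ)) with M^τ(Ω) nonempty compact convex and h^τ bounded affine upper semicontinuous, fix f ∈ C(Ω) and define Q(g) = P^τ(f+g) − P^τ(f) for g ∈ C(Ω). Then the Fenchel–Legendre transform Q*(μ) = sup_{g ∈ C(Ω)} (μ(g) − Q(g)), defined on the space of finite signed measures on Ω with the weak* topology, has effective domain exactly M^τ(Ω), and for every μ ∈ M^τ(Ω), Q*(μ) = P^τ(f) − h^τ(μ) − μ(f). -/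
/-
For `μ ∈ M` the inequality `Q*(μ) ≤ P(f) − h(μ) − μ(f)` is read off the variational formula for
`P(f + g)`. For the reverse inequality, separate the point `(μ, h μ + ε)` from the closed convex
hypograph of `h`; a continuous functional on the weak-* dual is evaluation at some `g`, and the
separation says `ν(g) + h(ν) ≤ μ(g) + h(μ) + ε` on `M`, i.e. `P(g)` is almost attained at `μ`;
testing `Q*` at `g − f` then gives `Q*(μ) ≥ P(f) − h(μ) − μ(f) − ε`. For `μ ∉ M`, separating `μ`
from `M` by some `g` makes `μ(tg) − Q(tg)` grow linearly in `t`, so `Q*(μ) = ⊤`. Compactness of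
`M` and upper semicontinuity of `h` make every `P(g)` a finite supremum.
-/

instance WeakDual.instLocallyConvexSpace {E : Type*} [AddCommGroup E] [TopologicalSpace E]
    [Module ℝ E] : LocallyConvexSpace ℝ (WeakDual ℝ E) :=
  WeakBilin.locallyConvexSpace

theorem WeakDual.exists_forall_eq_apply {E : Type*} [AddCommGroup E] [TopologicalSpace E]
    [Module ℝ E] (φ : WeakDual ℝ E →L[ℝ] ℝ) : ∃ g : E, ∀ μ : WeakDual ℝ E, φ μ = μ g :=
  (LinearMap.dualEmbedding_surjective (topDualPairing ℝ E) φ).imp fun _ hg μ => by rw [← hg]; rfl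

theorem ConcaveOn.exists_forall_add_lt_of_upperSemicontinuousOn {V : Type*} [AddCommGroup V]
    [Module ℝ V] [TopologicalSpace V] [IsTopologicalAddGroup V] [ContinuousSMul ℝ V]
    [LocallyConvexSpace ℝ V] {M : Set V} {h : V → ℝ} (hh : ConcaveOn ℝ M h) (hM : IsClosed M)
    (husc : UpperSemicontinuousOn h M) {x : V} (hx : x ∈ M) {ε : ℝ} (hε : 0 < ε) :
    ∃ φ : V →L[ℝ] ℝ, ∀ y ∈ M, φ y + h y < φ x + h x + ε := by
  obtain ⟨Φ, u, hΦA, hΦx⟩ := geometric_hahn_banach_closed_point hh.convex_hypograph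
    ((upperSemicontinuousOn_iff_isClosed_hypograph hM).1 husc)
    (x := (x, h x + ε)) (by simp [hε])
  set ψ : V →L[ℝ] ℝ := Φ.comp (ContinuousLinearMap.inl ℝ V ℝ)
  set c : ℝ := Φ (0, 1)
  have hΦ : ∀ y t, Φ (y, t) = ψ y + t * c := fun y t => by
    have : (y, t) = (y, 0) + t • ((0 : V), (1 : ℝ)) := by simp
    rw [this, map_add, map_smul, smul_eq_mul]; rfl
  have hA : ∀ y ∈ M, ψ y + h y * c < u := fun y hy => hΦ y (h y) ▸ hΦA _ ⟨hy, le_rfl⟩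
  rw [hΦ] at hΦx
  -- comparing `(x, h x)` with `(x, h x + ε)` shows that the separating hyperplane is not vertical
  have hc : 0 < c := pos_of_mul_pos_left (by linarith [hA x hx]) hε.le
  refine ⟨c⁻¹ • ψ, fun y hy => ?_⟩
  have := hA y hy
  change c⁻¹ * ψ y + h y < c⁻¹ * ψ x + h x + ε
  rw [← mul_lt_mul_iff_of_pos_left hc]
  field_simp
  linarith

section FenchelConjugate

variable {E : Type*} [AddCommGroup E] [TopologicalSpace E] [Module ℝ E]

noncomputable def fenchelConjugate (Q : E → ℝ) (μ : WeakDual ℝ E) : EReal :=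
  ⨆ g : E, ((μ g - Q g : ℝ) : EReal)

theorem le_fenchelConjugate (Q : E → ℝ) (μ : WeakDual ℝ E) (g : E) :
    ((μ g - Q g : ℝ) : EReal) ≤ fenchelConjugate Q μ :=
  le_iSup (fun g => ((μ g - Q g : ℝ) : EReal)) g

variable {M : Set (WeakDual ℝ E)} {h : WeakDual ℝ E → ℝ} {P : E → ℝ}

theorem isLUB_sSup_image_apply_add (hne : M.Nonempty) (hcomp : IsCompact M)
    (husc : UpperSemicontinuousOn h M) (g : E) :
    IsLUB ((fun μ : WeakDual ℝ E => μ g + h μ) '' M)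
      (sSup ((fun μ : WeakDual ℝ E => μ g + h μ) '' M)) :=
  isLUB_csSup (hne.image _) <|
    ((WeakDual.eval_continuous g).continuousOn.upperSemicontinuousOn.add husc).bddAbove_of_isCompact
      hcomp

theorem sub_pressure_le (hP : ∀ g, IsLUB ((fun μ : WeakDual ℝ E => μ g + h μ) '' M) (P g))
    {μ : WeakDual ℝ E} (hμ : μ ∈ M) (f g : E) :
    μ g - (P (f + g) - P f) ≤ P f - h μ - μ f := by
  have := (hP (f + g)).1 ⟨μ, hμ, rfl⟩
  simp only [map_add] at this
  linarith

theorem exists_lt_sub_pressure (hP : ∀ g, IsLUB ((fun μ : WeakDual ℝ E => μ g + h μ) '' M) (P g))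
    (hh : ConcaveOn ℝ M h) (hM : IsClosed M) (husc : UpperSemicontinuousOn h M)
    {μ : WeakDual ℝ E} (hμ : μ ∈ M) (f : E) {r : ℝ} (hr : r < P f - h μ - μ f) :
    ∃ g, r < μ g - (P (f + g) - P f) := by
  obtain ⟨φ, hφ⟩ := hh.exists_forall_add_lt_of_upperSemicontinuousOn hM husc hμ
    (half_pos (sub_pos.2 hr))
  obtain ⟨g, hg⟩ := WeakDual.exists_forall_eq_apply φ
  have hPg : P g ≤ μ g + h μ + (P f - h μ - μ f - r) / 2 :=
    (hP g).2 <| Set.forall_mem_image.2 fun ν hν => by simpa only [hg] using (hφ ν hν).le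
  refine ⟨g - f, ?_⟩
  rw [add_sub_cancel, map_sub]
  linarith

theorem fenchelConjugate_pressure_eq
    (hP : ∀ g, IsLUB ((fun μ : WeakDual ℝ E => μ g + h μ) '' M) (P g))
    (hh : ConcaveOn ℝ M h) (hM : IsClosed M) (husc : UpperSemicontinuousOn h M)
    {μ : WeakDual ℝ E} (hμ : μ ∈ M) (f : E) :
    fenchelConjugate (fun g => P (f + g) - P f) μ = ((P f - h μ - μ f : ℝ) : EReal) := by
  refine iSup_eq_of_forall_le_of_forall_lt_exists_gt
    (fun g => EReal.coe_le_coe_iff.2 (sub_pressure_le hP hμ f g)) fun w hw => ?_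
  obtain ⟨r, hwr, hr⟩ := EReal.lt_iff_exists_real_btwn.1 hw
  obtain ⟨g, hg⟩ := exists_lt_sub_pressure hP hh hM husc hμ f (EReal.coe_lt_coe_iff.1 hr)
  exact ⟨g, hwr.trans (EReal.coe_lt_coe_iff.2 hg)⟩

theorem fenchelConjugate_pressure_eq_top
    (hP : ∀ g, IsLUB ((fun μ : WeakDual ℝ E => μ g + h μ) '' M) (P g))
    (hconv : Convex ℝ M) (hM : IsClosed M) {μ : WeakDual ℝ E} (hμ : μ ∉ M) (f : E) :
    fenchelConjugate (fun g => P (f + g) - P f) μ = ⊤ := by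
  obtain ⟨φ, u, hφM, hφμ⟩ := geometric_hahn_banach_closed_point hconv hM hμ
  obtain ⟨g, hg⟩ := WeakDual.exists_forall_eq_apply φ
  have hgrowth : ∀ t : ℝ, 0 ≤ t → t * (μ g - u) ≤ μ (t • g) - (P (f + t • g) - P f) := by
    intro t ht
    have : P (f + t • g) ≤ P f + t * u := (hP _).2 <| Set.forall_mem_image.2 fun ν hν => by
      have hνf := (hP f).1 ⟨ν, hν, rfl⟩
      have hνg := mul_le_mul_of_nonneg_left (hg ν ▸ (hφM ν hν).le) ht
      simp only [map_add, map_smul, smul_eq_mul] at hνf ⊢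
      linarith
    rw [map_smul, smul_eq_mul]
    linarith
  have hd : 0 < μ g - u := sub_pos.2 (hg μ ▸ hφμ)
  refine (EReal.eq_top_iff_forall_lt _).2 fun y => ?_
  set t := (|y| + 1) / (μ g - u)
  refine lt_of_lt_of_le (EReal.coe_lt_coe_iff.2 ?_) (le_fenchelConjugate _ μ (t • g))
  calc y < |y| + 1 := by linarith [le_abs_self y]
    _ = t * (μ g - u) := (div_mul_cancel₀ _ hd.ne').symm
    _ ≤ _ := hgrowth t (by positivity)

end FenchelConjugate

theorem stmt5_general {Ω : Type} [TopologicalSpace Ω]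
    (M : Set (WeakDual ℝ C(Ω, ℝ))) (hne : M.Nonempty) (hcomp : IsCompact M)
    (hconv : Convex ℝ M)
    (h : WeakDual ℝ C(Ω, ℝ) → ℝ)
    (haff : ∀ μ ∈ M, ∀ ν ∈ M, ∀ a b : ℝ, 0 ≤ a → 0 ≤ b → a + b = 1 →
      h (a • μ + b • ν) = a * h μ + b * h ν)
    (husc : UpperSemicontinuousOn h M)
    (f : C(Ω, ℝ))
    (P : C(Ω, ℝ) → ℝ)
    (hP : ∀ g : C(Ω, ℝ), P g = sSup ((fun μ : WeakDual ℝ C(Ω, ℝ) => μ g + h μ) '' M))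
    (Qstar : WeakDual ℝ C(Ω, ℝ) → EReal)
    (hQ : ∀ μ : WeakDual ℝ C(Ω, ℝ),
      Qstar μ = ⨆ g : C(Ω, ℝ), (((μ g - (P (f + g) - P f) : ℝ)) : EReal)) :
    {μ : WeakDual ℝ C(Ω, ℝ) | Qstar μ ≠ ⊤} = M ∧
      ∀ μ ∈ M, Qstar μ = (((P f - h μ - μ f : ℝ)) : EReal) := by
  have hLUB : ∀ g, IsLUB ((fun μ : WeakDual ℝ C(Ω, ℝ) => μ g + h μ) '' M) (P g) := fun g =>
    hP g ▸ isLUB_sSup_image_apply_add hne hcomp husc g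
  have hconc : ConcaveOn ℝ M h := ⟨hconv, fun μ hμ ν hν a b ha hb hab => by
    simp only [smul_eq_mul, haff μ hμ ν hν a b ha hb hab, le_refl]⟩
  have hval : ∀ μ ∈ M, Qstar μ = (((P f - h μ - μ f : ℝ)) : EReal) := fun μ hμ =>
    (hQ μ).trans (fenchelConjugate_pressure_eq hLUB hconc hcomp.isClosed husc hμ f)
  refine ⟨Set.ext fun μ => ⟨fun hμ => ?_, fun hμ => (hval μ hμ).trans_ne (EReal.coe_ne_top _)⟩,
    hval⟩
  by_contra hμM
  exact hμ ((hQ μ).trans (fenchelConjugate_pressure_eq_top hLUB hconv hcomp.isClosed hμM f))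

/-- The Fenchel–Legendre transform `Q*` of `Q(g) = P(f+g) − P(f)` has effective domain exactly
`M = M^τ(Ω)`, and `Q*(μ) = P(f) − h(μ) − μ(f)` for `μ ∈ M`. -/
theorem stmt5 {Ω : Type} [TopologicalSpace Ω] [CompactSpace Ω]
    [TopologicalSpace.MetrizableSpace Ω] [Nonempty Ω]
    (M : Set (WeakDual ℝ C(Ω, ℝ))) (hne : M.Nonempty) (hcomp : IsCompact M)
    (hconv : Convex ℝ M)
    (hprob : ∀ μ ∈ M, μ (1 : C(Ω, ℝ)) = 1 ∧ ∀ g : C(Ω, ℝ), (∀ ω, 0 ≤ g ω) → 0 ≤ μ g)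
    (h : WeakDual ℝ C(Ω, ℝ) → ℝ)
    (hbdd : ∃ C : ℝ, ∀ μ ∈ M, |h μ| ≤ C)
    (haff : ∀ μ ∈ M, ∀ ν ∈ M, ∀ a b : ℝ, 0 ≤ a → 0 ≤ b → a + b = 1 →
      h (a • μ + b • ν) = a * h μ + b * h ν)
    (husc : UpperSemicontinuousOn h M)
    (f : C(Ω, ℝ))
    (P : C(Ω, ℝ) → ℝ)
    (hP : ∀ g : C(Ω, ℝ), P g = sSup ((fun μ : WeakDual ℝ C(Ω, ℝ) => μ g + h μ) '' M))
    (Qstar : WeakDual ℝ C(Ω, ℝ) → EReal)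
    (hQ : ∀ μ : WeakDual ℝ C(Ω, ℝ),
      Qstar μ = ⨆ g : C(Ω, ℝ), (((μ g - (P (f + g) - P f) : ℝ)) : EReal)) :
    {μ : WeakDual ℝ C(Ω, ℝ) | Qstar μ ≠ ⊤} = M ∧
      ∀ μ ∈ M, Qstar μ = (((P f - h μ - μ f : ℝ)) : EReal) :=
  stmt5_general M hne hcomp hconv h haff husc f P hP Qstar hQ
end

section
/- With the notation above, define L_S : ℝ^d → ℝ by L_S(t) = P^τ(f + tS) − P^τ(f), where tS = Σ_{i=1}^d t_i g_i. Then I_S equals the Fenchel–Legendre transform of L_S: for all x ∈ ℝ^d, I_S(x) = L_S*(x) = sup_{t ∈ ℝ^d} (⟨t,x⟩ − L_S(t)). -/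
open Filter Topology Pointwise

/-- `I_S` equals the Fenchel–Legendre transform of `L_S(t) = P(f + tS) − P(f)`:
`I_S(x) = sup_t (⟨t,x⟩ − L_S(t))`. -/
theorem stmt10 {Ω : Type} [TopologicalSpace Ω] [CompactSpace Ω]
    [TopologicalSpace.MetrizableSpace Ω] [Nonempty Ω]
    (M : Set (WeakDual ℝ C(Ω, ℝ))) (hne : M.Nonempty) (hcomp : IsCompact M)
    (hconv : Convex ℝ M)
    (hprob : ∀ μ ∈ M, μ (1 : C(Ω, ℝ)) = 1 ∧ ∀ g : C(Ω, ℝ), (∀ ω, 0 ≤ g ω) → 0 ≤ μ g)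
    (h : WeakDual ℝ C(Ω, ℝ) → ℝ)
    (hbdd : ∃ C : ℝ, ∀ μ ∈ M, |h μ| ≤ C)
    (haff : ∀ μ ∈ M, ∀ ν ∈ M, ∀ a b : ℝ, 0 ≤ a → 0 ≤ b → a + b = 1 →
      h (a • μ + b • ν) = a * h μ + b * h ν)
    (husc : UpperSemicontinuousOn h M)
    (f : C(Ω, ℝ))
    (P : C(Ω, ℝ) → ℝ)
    (hP : ∀ g : C(Ω, ℝ), P g = sSup ((fun μ : WeakDual ℝ C(Ω, ℝ) => μ g + h μ) '' M))
    (Qstar : WeakDual ℝ C(Ω, ℝ) → EReal)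
    (hQ : ∀ μ : WeakDual ℝ C(Ω, ℝ),
      Qstar μ = ⨆ g : C(Ω, ℝ), (((μ g - (P (f + g) - P f) : ℝ)) : EReal))
    (d : ℕ) (S : Fin d → C(Ω, ℝ))
    (IS : (Fin d → ℝ) → EReal)
    (hIS : ∀ x : Fin d → ℝ,
      IS x = sInf (Qstar '' {μ : WeakDual ℝ C(Ω, ℝ) | μ ∈ M ∧ ∀ i, μ (S i) = x i})) :
    ∀ x : Fin d → ℝ,
      IS x = ⨆ t : Fin d → ℝ,
        ((((∑ i, t i * x i) - (P (f + ∑ i, t i • S i) - P f) : ℝ)) : EReal) := by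
  classical
  obtain ⟨C₀, hC₀⟩ := hbdd
  set C : ℝ := max C₀ 0 with hCdef
  have hC0 : (0:ℝ) ≤ C := le_max_right _ _
  have hCb : ∀ μ ∈ M, |h μ| ≤ C := fun μ hμ => (hC₀ μ hμ).trans (le_max_left _ _)
  have hgb : ∀ (g : C(Ω,ℝ)) (ω : Ω), -‖g‖ ≤ g ω ∧ g ω ≤ ‖g‖ := by
    intro g ω
    have := g.norm_coe_le_norm ω
    rw [Real.norm_eq_abs] at this
    exact abs_le.mp this
  -- |μ g| ≤ ‖g‖ for μ ∈ M
  have hμg : ∀ μ ∈ M, ∀ g : C(Ω, ℝ), |μ g| ≤ ‖g‖ := by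
    intro μ hμ g
    obtain ⟨h1, hpos⟩ := hprob μ hμ
    have e1 : μ ((‖g‖ : ℝ) • (1 : C(Ω, ℝ)) - g) = ‖g‖ - μ g := by
      rw [map_sub, map_smul, h1, smul_eq_mul, mul_one]
    have e2 : μ ((‖g‖ : ℝ) • (1 : C(Ω, ℝ)) + g) = ‖g‖ + μ g := by
      rw [map_add, map_smul, h1, smul_eq_mul, mul_one]
    have p1 : 0 ≤ ‖g‖ - μ g := by
      rw [← e1]
      refine hpos _ fun ω => ?_
      simp only [ContinuousMap.sub_apply, ContinuousMap.smul_apply, ContinuousMap.one_apply,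
        smul_eq_mul, mul_one]
      linarith [(hgb g ω).2]
    have p2 : 0 ≤ ‖g‖ + μ g := by
      rw [← e2]
      refine hpos _ fun ω => ?_
      simp only [ContinuousMap.add_apply, ContinuousMap.smul_apply, ContinuousMap.one_apply,
        smul_eq_mul, mul_one]
      linarith [(hgb g ω).1]
    rw [abs_le]
    constructor <;> linarith
  have himgne : ∀ g : C(Ω,ℝ), ((fun μ : WeakDual ℝ C(Ω,ℝ) => μ g + h μ) '' M).Nonempty :=
    fun g => hne.image _
  have himgbdd : ∀ g : C(Ω,ℝ), BddAbove ((fun μ : WeakDual ℝ C(Ω,ℝ) => μ g + h μ) '' M) := by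
    intro g
    refine ⟨‖g‖ + C, ?_⟩
    rintro r ⟨μ, hμ, rfl⟩
    have h1 := abs_le.mp (hμg μ hμ g)
    have h2 := abs_le.mp (hCb μ hμ)
    simp only
    linarith [h1.2, h2.2]
  have hPub : ∀ μ ∈ M, ∀ g : C(Ω,ℝ), μ g + h μ ≤ P g := by
    intro μ hμ g
    rw [hP g]
    exact le_csSup (himgbdd g) ⟨μ, hμ, rfl⟩
  have hPle : ∀ (g : C(Ω,ℝ)) (r : ℝ), (∀ μ ∈ M, μ g + h μ ≤ r) → P g ≤ r := by
    intro g r H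
    rw [hP g]
    exact csSup_le (himgne g) (by rintro _ ⟨μ, hμ, rfl⟩; exact H μ hμ)
  -- characterization of Qstar μ ≤ r
  have hchar : ∀ (μ : WeakDual ℝ C(Ω,ℝ)) (r : ℝ),
      Qstar μ ≤ (r : EReal) ↔ ∀ g : C(Ω,ℝ), μ g - (P (f + g) - P f) ≤ r := by
    intro μ r
    rw [hQ μ]
    constructor
    · intro H g
      exact EReal.coe_le_coe_iff.mp
        ((le_iSup (fun g : C(Ω,ℝ) => ((μ g - (P (f+g) - P f) : ℝ) : EReal)) g).trans H)
    · intro H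
      exact iSup_le fun g => EReal.coe_le_coe_iff.mpr (H g)
  have hQub : ∀ μ ∈ M, Qstar μ ≤ ((P f - μ f - h μ : ℝ) : EReal) := by
    intro μ hμ
    rw [hchar]
    intro g
    have h1 : μ (f + g) + h μ ≤ P (f + g) := hPub μ hμ (f + g)
    have h2 : μ (f + g) = μ f + μ g := map_add μ f g
    linarith
  have hQ0 : ∀ μ : WeakDual ℝ C(Ω,ℝ), (0 : EReal) ≤ Qstar μ := by
    intro μ
    rw [hQ μ]
    have h0 := le_iSup (fun g : C(Ω,ℝ) => ((μ g - (P (f + g) - P f) : ℝ) : EReal)) 0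
    simpa using h0
  set R : ℝ := |P f| + ‖f‖ + C with hRdef
  have hR0 : (0:ℝ) ≤ R := by
    have := abs_nonneg (P f); have := norm_nonneg f; rw [hRdef]; linarith
  have hβR : ∀ μ ∈ M, P f - μ f - h μ ≤ R := by
    intro μ hμ
    have h1 := abs_le.mp (hμg μ hμ f)
    have h2 := abs_le.mp (hCb μ hμ)
    have h3 := le_abs_self (P f)
    rw [hRdef]
    linarith [h1.1, h2.1]
  intro x
  rw [hIS x]
  refine le_antisymm ?_ ?_
  · -- hard direction : sInf ≤ iSup
    by_contra hcon
    push_neg at hcon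
    obtain ⟨c, hc1, hc2⟩ := EReal.exists_between_coe_real hcon
    -- the epigraph-like set E
    set E : Set ((Fin d → ℝ) × ℝ) :=
      {z | ∃ μ ∈ M, (∀ i, μ (S i) = z.1 i) ∧ Qstar μ ≤ (z.2 : EReal)} with hEdef
    have hxcE : ((x, c) : (Fin d → ℝ) × ℝ) ∉ E := by
      rintro ⟨μ, hμM, hμx, hq⟩
      have hmem : Qstar μ ∈ Qstar '' {μ : WeakDual ℝ C(Ω, ℝ) | μ ∈ M ∧ ∀ i, μ (S i) = x i} :=
        ⟨μ, ⟨hμM, hμx⟩, rfl⟩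
      exact absurd ((sInf_le hmem).trans hq) (not_le.mpr hc2)
    have hEconv : Convex ℝ E := by
      rintro ⟨y₁, r₁⟩ ⟨μ₁, hμ₁, hx₁, hq₁⟩ ⟨y₂, r₂⟩ ⟨μ₂, hμ₂, hx₂, hq₂⟩ a b ha hb hab
      have hr₁ := (hchar μ₁ r₁).mp hq₁
      have hr₂ := (hchar μ₂ r₂).mp hq₂
      refine ⟨a • μ₁ + b • μ₂, hconv hμ₁ hμ₂ ha hb hab, ?_, ?_⟩
      · intro i
        have e : (a • μ₁ + b • μ₂) (S i) = a * μ₁ (S i) + b * μ₂ (S i) := rfl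
        have e2 : (a • ((y₁, r₁) : (Fin d → ℝ) × ℝ) + b • (y₂, r₂)).1 i = a * y₁ i + b * y₂ i := rfl
        rw [e, e2, hx₁ i, hx₂ i]
      · have hz2 : (a • ((y₁, r₁) : (Fin d → ℝ) × ℝ) + b • (y₂, r₂)).2 = a * r₁ + b * r₂ := rfl
        rw [hz2, hchar]
        intro g
        have e : (a • μ₁ + b • μ₂) g = a * μ₁ g + b * μ₂ g := rfl
        rw [e]
        have k₁ := mul_le_mul_of_nonneg_left (hr₁ g) ha
        have k₂ := mul_le_mul_of_nonneg_left (hr₂ g) hb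
        have habQ : a * (P (f+g) - P f) + b * (P (f+g) - P f) = P (f+g) - P f := by
          rw [← add_mul, hab, one_mul]
        have k₁' : a * μ₁ g - a * (P (f+g) - P f) ≤ a * r₁ := by nlinarith [k₁]
        have k₂' : b * μ₂ g - b * (P (f+g) - P f) ≤ b * r₂ := by nlinarith [k₂]
        linarith
    -- E is closed : E = Φ '' W + {0} ×ˢ [0,∞)
    have hQcl : ∀ g : C(Ω,ℝ),
        IsClosed {z : WeakDual ℝ C(Ω,ℝ) × ℝ | z.1 g - (P (f+g) - P f) ≤ z.2} :=
      fun g => isClosed_le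
        (((WeakDual.eval_continuous g).comp continuous_fst).sub continuous_const)
        continuous_snd
    set W : Set (WeakDual ℝ C(Ω,ℝ) × ℝ) :=
      (M ×ˢ Set.Icc (0:ℝ) R) ∩ ⋂ g : C(Ω,ℝ), {z | z.1 g - (P (f+g) - P f) ≤ z.2} with hWdef
    have hWcomp : IsCompact W :=
      (hcomp.prod isCompact_Icc).inter_right (isClosed_iInter hQcl)
    have hΦcont : Continuous (fun z : WeakDual ℝ C(Ω,ℝ) × ℝ =>
        ((fun i => z.1 (S i), z.2) : (Fin d → ℝ) × ℝ)) := by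
      refine Continuous.prodMk ?_ continuous_snd
      exact continuous_pi fun i => (WeakDual.eval_continuous (S i)).comp continuous_fst
    have hEeq : E = ((fun z : WeakDual ℝ C(Ω,ℝ) × ℝ =>
        ((fun i => z.1 (S i), z.2) : (Fin d → ℝ) × ℝ)) '' W)
        + ({(0 : Fin d → ℝ)} ×ˢ Set.Ici (0:ℝ)) := by
      ext ⟨y, r⟩
      constructor
      · rintro ⟨μ, hμM, hμx, hq⟩
        have hQr : ∀ g, μ g - (P (f+g) - P f) ≤ r := (hchar μ r).mp hq
        have hr0 : (0:ℝ) ≤ r := by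
          have h0 : ((0:ℝ) : EReal) ≤ ((r:ℝ) : EReal) := by
            rw [EReal.coe_zero]; exact (hQ0 μ).trans hq
          exact EReal.coe_le_coe_iff.mp h0
        have hQRe : Qstar μ ≤ ((R : ℝ) : EReal) :=
          (hQub μ hμM).trans (EReal.coe_le_coe_iff.mpr (hβR μ hμM))
        have hQR : ∀ g, μ g - (P (f+g) - P f) ≤ R := (hchar μ R).mp hQRe
        set q : ℝ := min r R with hqdef
        have hq0 : (0:ℝ) ≤ q := le_min hr0 hR0
        have hWmem : ((μ, q) : WeakDual ℝ C(Ω,ℝ) × ℝ) ∈ W := by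
          rw [hWdef]
          refine ⟨⟨hμM, hq0, min_le_right r R⟩, ?_⟩
          rw [Set.mem_iInter]
          intro g
          exact le_min (hQr g) (hQR g)
        have h1 : ((y, q) : (Fin d → ℝ) × ℝ) ∈ (fun z : WeakDual ℝ C(Ω,ℝ) × ℝ =>
            ((fun i => z.1 (S i), z.2) : (Fin d → ℝ) × ℝ)) '' W := by
          refine ⟨(μ, q), hWmem, ?_⟩
          simp only
          rw [Prod.mk.injEq]
          exact ⟨funext hμx, rfl⟩
        have h2 : ((0, r - q) : (Fin d → ℝ) × ℝ) ∈ ({(0 : Fin d → ℝ)} ×ˢ Set.Ici (0:ℝ)) := by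
          refine ⟨rfl, ?_⟩
          simp only [Set.mem_Ici, sub_nonneg]
          exact min_le_left r R
        have key : ((y, q) : (Fin d → ℝ) × ℝ) + (0, r - q) = (y, r) := by
          rw [Prod.mk_add_mk, add_zero, add_sub_cancel]
        have := Set.add_mem_add h1 h2
        rwa [key] at this
      · intro hmem
        rw [Set.mem_add] at hmem
        obtain ⟨z₁, hz₁, z₂, hz₂, hzsum⟩ := hmem
        obtain ⟨⟨μ, q⟩, hW, hΦ⟩ := hz₁
        obtain ⟨hz₂1, hz₂2⟩ := hz₂
        rw [hWdef] at hW
        obtain ⟨⟨hμM, hq0, hqR⟩, hWi⟩ := hW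
        rw [Set.mem_iInter] at hWi
        refine ⟨μ, hμM, ?_, ?_⟩
        · intro i
          have h1 : z₁.1 = fun i => μ (S i) := by rw [← hΦ]
          have h2 : z₁.1 + z₂.1 = y := congrArg Prod.fst hzsum
          have h3 : z₂.1 = 0 := hz₂1
          rw [← h2, h1, h3]
          simp
        · have h1 : z₁.2 = q := by rw [← hΦ]
          have h2 : z₁.2 + z₂.2 = r := congrArg Prod.snd hzsum
          have h4 : (0:ℝ) ≤ z₂.2 := hz₂2
          have h5 : Qstar μ ≤ ((q:ℝ) : EReal) := (hchar μ q).mpr fun g => hWi g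
          refine h5.trans (EReal.coe_le_coe_iff.mpr ?_)
          show q ≤ r
          rw [← h2, h1]
          linarith
    have hEclosed : IsClosed E := by
      rw [hEeq]
      exact IsClosed.add_left_of_isCompact (isClosed_singleton.prod isClosed_Ici)
        (hWcomp.image hΦcont)
    obtain ⟨φ, u, hsep, hu⟩ := geometric_hahn_banach_closed_point hEconv hEclosed hxcE
    set tv : Fin d → ℝ := fun i => φ (Pi.single i 1, 0) with htv
    set sv : ℝ := φ (0, 1) with hsv
    have hφeval : ∀ (y : Fin d → ℝ) (r : ℝ), φ (y, r) = (∑ i, tv i * y i) + r * sv := by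
      intro y r
      have hys : ∑ i, y i • (Pi.single i (1:ℝ) : Fin d → ℝ) = y := by
        funext j
        rw [Finset.sum_apply]
        simp [Pi.single_apply]
      have hsum : ((y, (0:ℝ)) : (Fin d → ℝ) × ℝ)
          = ∑ i, y i • (((Pi.single i (1:ℝ) : Fin d → ℝ), (0:ℝ)) : (Fin d → ℝ) × ℝ) := by
        rw [Prod.ext_iff]
        constructor
        · rw [Prod.fst_sum]
          simp only [Prod.smul_mk]
          exact hys.symm
        · rw [Prod.snd_sum]
          simp
      have hr : ((0 : Fin d → ℝ), r) = r • (((0 : Fin d → ℝ), (1:ℝ)) : (Fin d → ℝ) × ℝ) := by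
        rw [Prod.smul_mk, smul_zero, smul_eq_mul, mul_one]
      calc φ (y, r) = φ ((y, 0) + (0, r)) := by rw [Prod.mk_add_mk, add_zero, zero_add]
        _ = φ (y, 0) + φ (0, r) := map_add φ _ _
        _ = (∑ i, tv i * y i) + r * sv := by
            congr 1
            · rw [hsum, map_sum]
              refine Finset.sum_congr rfl fun i _ => ?_
              simp only [htv]
              rw [map_smul, smul_eq_mul, mul_comm]
            · rw [hr, map_smul, smul_eq_mul, ← hsv]
    have hkey : ∀ μ ∈ M, (∑ i, tv i * μ (S i)) + (P f - μ f - h μ) * sv < u := by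
      intro μ hμ
      have hmem : (((fun i => μ (S i) : Fin d → ℝ), P f - μ f - h μ) : (Fin d → ℝ) × ℝ) ∈ E :=
        ⟨μ, hμ, fun i => rfl, hQub μ hμ⟩
      have := hsep _ hmem
      rwa [hφeval] at this
    have hux : u < (∑ i, tv i * x i) + c * sv := by
      have := hu
      rwa [hφeval] at this
    obtain ⟨μ₀, hμ₀⟩ := hne
    have hsv0 : sv ≤ 0 := by
      by_contra hsv'
      push_neg at hsv'
      set A : ℝ := ∑ i, tv i * μ₀ (S i) with hA
      set n : ℝ := max (P f - μ₀ f - h μ₀) ((u - A)/sv + 1) with hn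
      have hmemn : (((fun i => μ₀ (S i) : Fin d → ℝ), n) : (Fin d → ℝ) × ℝ) ∈ E :=
        ⟨μ₀, hμ₀, fun i => rfl,
          (hQub μ₀ hμ₀).trans (EReal.coe_le_coe_iff.mpr (le_max_left _ _))⟩
      have h1 := hsep _ hmemn
      rw [hφeval] at h1
      have h2 : (u - A)/sv + 1 ≤ n := le_max_right _ _
      have h3 : u - A < n * sv := by
        have hm := mul_le_mul_of_nonneg_right h2 (le_of_lt hsv')
        rw [add_mul, div_mul_cancel₀ _ (ne_of_gt hsv'), one_mul] at hm
        linarith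
      linarith
    rcases eq_or_lt_of_le hsv0 with hsveq | hsvlt
    · -- sv = 0
      have hts : ∀ μ ∈ M, ∑ i, tv i * μ (S i) < u := by
        intro μ hμ
        have := hkey μ hμ
        rw [hsveq, mul_zero, add_zero] at this
        exact this
      have htx : u < ∑ i, tv i * x i := by
        have := hux
        rw [hsveq, mul_zero, add_zero] at this
        exact this
      set δ : ℝ := (∑ i, tv i * x i) - u with hδ
      have hδ0 : 0 < δ := by rw [hδ]; linarith
      set lam : ℝ := max 0 (c/δ) + 1 with hlam
      have hlam0 : 0 < lam := by
        have := le_max_left 0 (c/δ)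
        rw [hlam]; linarith
      have hlamc : c < lam * δ := by
        have h1 : c/δ < lam := by
          have := le_max_right 0 (c/δ)
          rw [hlam]; linarith
        calc c = (c/δ) * δ := by field_simp
          _ < lam * δ := mul_lt_mul_of_pos_right h1 hδ0
      have hPb : P (f + ∑ i, (lam * tv i) • S i) ≤ P f + lam * u := by
        apply hPle
        intro μ hμ
        have hm : μ (f + ∑ i, (lam * tv i) • S i) = μ f + lam * ∑ i, tv i * μ (S i) := by
          rw [map_add, map_sum, Finset.mul_sum]
          congr 1
          refine Finset.sum_congr rfl fun i _ => ?_
          rw [map_smul, smul_eq_mul]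
          ring
        rw [hm]
        have h1 : μ f + h μ ≤ P f := hPub μ hμ f
        have h2 : lam * (∑ i, tv i * μ (S i)) ≤ lam * u :=
          mul_le_mul_of_nonneg_left (le_of_lt (hts μ hμ)) (le_of_lt hlam0)
        linarith
      have hcle : c ≤ (∑ i, (lam * tv i) * x i) - (P (f + ∑ i, (lam * tv i) • S i) - P f) := by
        have e : ∑ i, (lam * tv i) * x i = lam * ∑ i, tv i * x i := by
          rw [Finset.mul_sum]
          exact Finset.sum_congr rfl fun i _ => by ring
        rw [e]
        have e2 : lam * (∑ i, tv i * x i) - lam * u = lam * δ := by rw [hδ]; ring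
        linarith
      have hfin : (c : EReal) ≤ ⨆ t : Fin d → ℝ,
          ((((∑ i, t i * x i) - (P (f + ∑ i, t i • S i) - P f) : ℝ)) : EReal) :=
        (EReal.coe_le_coe_iff.mpr hcle).trans
          (le_iSup (fun t : Fin d → ℝ =>
            ((((∑ i, t i * x i) - (P (f + ∑ i, t i • S i) - P f) : ℝ)) : EReal))
            (fun i => lam * tv i))
      exact absurd (hc1.trans_le hfin) (lt_irrefl _)
    · -- sv < 0
      set ns : ℝ := -sv with hns
      have hns0 : 0 < ns := by rw [hns]; linarith
      have hsv' : sv = -ns := by rw [hns]; ring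
      set τ : Fin d → ℝ := fun i => tv i / ns with hτ
      have hPb : P (f + ∑ i, τ i • S i) - P f ≤ u / ns := by
        have hPb' : P (f + ∑ i, τ i • S i) ≤ P f + u / ns := by
          apply hPle
          intro μ hμ
          have hm : μ (f + ∑ i, τ i • S i) = μ f + (∑ i, tv i * μ (S i)) / ns := by
            rw [map_add, map_sum, Finset.sum_div]
            congr 1
            refine Finset.sum_congr rfl fun i _ => ?_
            rw [map_smul, smul_eq_mul, hτ]
            ring
          rw [hm]
          have hk := hkey μ hμ
          have hexp : (μ f + (∑ i, tv i * μ (S i))/ns + h μ - P f) * ns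
              = (∑ i, tv i * μ (S i)) + (P f - μ f - h μ) * sv := by
            rw [hsv']
            field_simp
            ring
          have h2 : (μ f + (∑ i, tv i * μ (S i))/ns + h μ - P f) * ns < u := by
            rw [hexp]; exact hk
          have h3 : μ f + (∑ i, tv i * μ (S i))/ns + h μ - P f < u / ns := by
            rw [lt_div_iff₀ hns0]; exact h2
          linarith
        linarith
      have hcx : c ≤ (∑ i, τ i * x i) - (P (f + ∑ i, τ i • S i) - P f) := by
        have e : (∑ i, τ i * x i) * ns = ∑ i, tv i * x i := by
          rw [Finset.sum_mul]
          refine Finset.sum_congr rfl fun i _ => ?_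
          rw [hτ]
          field_simp
        have h2 : u / ns < (∑ i, τ i * x i) - c := by
          rw [div_lt_iff₀ hns0]
          calc u < (∑ i, tv i * x i) + c * sv := hux
            _ = ((∑ i, τ i * x i) - c) * ns := by rw [sub_mul, e, hsv']; ring
        linarith
      have hfin : (c : EReal) ≤ ⨆ t : Fin d → ℝ,
          ((((∑ i, t i * x i) - (P (f + ∑ i, t i • S i) - P f) : ℝ)) : EReal) :=
        (EReal.coe_le_coe_iff.mpr hcx).trans
          (le_iSup (fun t : Fin d → ℝ =>
            ((((∑ i, t i * x i) - (P (f + ∑ i, t i • S i) - P f) : ℝ)) : EReal)) τ)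
      exact absurd (hc1.trans_le hfin) (lt_irrefl _)
  · -- easy direction : iSup ≤ sInf
    refine le_sInf ?_
    rintro b ⟨μ, ⟨hμM, hμx⟩, rfl⟩
    refine iSup_le fun t => ?_
    have hmom : μ (∑ i, t i • S i) = ∑ i, t i * x i := by
      rw [map_sum]
      exact Finset.sum_congr rfl fun i _ => by rw [map_smul, smul_eq_mul, hμx i]
    rw [hQ μ]
    have h0 := le_iSup (fun g : C(Ω,ℝ) => ((μ g - (P (f+g) - P f) : ℝ) : EReal)) (∑ i, t i • S i)
    rw [hmom] at h0
    exact h0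
end

section
/- With L_S(t) = P^τ(f+tS) − P^τ(f) as above, suppose x ∈ ℝ^d is such that the subdifferential ∂L_S*(x) is nonempty, and let t ∈ ∂L_S*(x). Then there exists μ ∈ M^τ(Ω) which is an equilibrium state for f + tS (i.e., μ(f+tS) + h^τ(μ) = P^τ(f+tS)), such that x = p_S(μ) and L_S*(x) = Q*(μ). -/
open Filter Topology

lemma usc_max {X : Type*} [TopologicalSpace X] {K : Set X} (hK : IsCompact K)
    (hne : K.Nonempty) {F : X → ℝ} (hF : UpperSemicontinuousOn F K) :
    ∃ z ∈ K, ∀ w ∈ K, F w ≤ F z := by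
  by_contra hcon
  push_neg at hcon
  choose w hwK hlt using hcon
  have key : ∀ (z : X) (hz : z ∈ K), ∃ u : Set X, u ∈ 𝓝 z ∧ ∀ y ∈ u ∩ K, F y < F (w z hz) := by
    intro z hz
    have h1 : ∀ᶠ y in 𝓝[K] z, F y < F (w z hz) := hF z hz _ (hlt z hz)
    rw [eventually_iff, mem_nhdsWithin] at h1
    obtain ⟨u, huo, hzu, hu⟩ := h1
    exact ⟨u, huo.mem_nhds hzu, fun y hy => hu hy⟩
  choose U hU hUlt using key
  obtain ⟨t, ht⟩ := hK.elim_nhds_subcover' U hU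
  have htne : t.Nonempty := by
    rcases hne with ⟨z, hz⟩
    rcases Set.mem_iUnion₂.1 (ht hz) with ⟨a, hat, _⟩
    exact ⟨a, hat⟩
  obtain ⟨b, hbt, hb⟩ := t.exists_max_image (fun a => F (w a.1 a.2)) htne
  have hzK : w b.1 b.2 ∈ K := hwK _ _
  rcases Set.mem_iUnion₂.1 (ht hzK) with ⟨a, hat, ha⟩
  exact absurd (hb a hat) (not_le.2 (hUlt a.1 a.2 _ ⟨ha, hzK⟩))

lemma usc_superlevel_closed {X : Type*} [TopologicalSpace X] {K : Set X} (hKc : IsClosed K)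
    {F : X → ℝ} (hF : UpperSemicontinuousOn F K) (c : ℝ) :
    IsClosed {z | z ∈ K ∧ c ≤ F z} := by
  refine isClosed_of_closure_subset fun z hz => ?_
  have hsub : {z | z ∈ K ∧ c ≤ F z} ⊆ K := fun y hy => hy.1
  have hzK : z ∈ K := hKc.closure_subset ((closure_mono hsub) hz)
  refine ⟨hzK, ?_⟩
  by_contra hlt
  push_neg at hlt
  have h1 : ∀ᶠ y in 𝓝[K] z, F y < c := hF z hzK c hlt
  have h2 : (𝓝[{z | z ∈ K ∧ c ≤ F z}] z).NeBot := mem_closure_iff_nhdsWithin_neBot.1 hz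
  have h3 : ∀ᶠ y in 𝓝[{z | z ∈ K ∧ c ≤ F z}] z, F y < c :=
    Filter.Eventually.filter_mono (nhdsWithin_mono z hsub) h1
  have h4 : ∀ᶠ y in 𝓝[{z | z ∈ K ∧ c ≤ F z}] z, y ∈ {z | z ∈ K ∧ c ≤ F z} :=
    eventually_mem_nhdsWithin
  obtain ⟨y, hy1, hy2⟩ := (h3.and h4).exists
  exact absurd hy2.2 (not_le.2 hy1)

/-- If `t` is a subgradient of `L_S^*` at `x` (where `L_S(t) = P(f + tS) − P(f)` and `L_S^*`
is its Fenchel–Legendre transform), then `x = p_S(μ)` for some equilibrium state `μ` of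
`f + tS`, and moreover `L_S^*(x) = Q*(μ)`. -/
theorem stmt11 {Ω : Type} [TopologicalSpace Ω] [CompactSpace Ω]
    [TopologicalSpace.MetrizableSpace Ω] [Nonempty Ω]
    (M : Set (WeakDual ℝ C(Ω, ℝ))) (hne : M.Nonempty) (hcomp : IsCompact M)
    (hconv : Convex ℝ M)
    (hprob : ∀ μ ∈ M, μ (1 : C(Ω, ℝ)) = 1 ∧ ∀ g : C(Ω, ℝ), (∀ ω, 0 ≤ g ω) → 0 ≤ μ g)
    (h : WeakDual ℝ C(Ω, ℝ) → ℝ)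
    (hbdd : ∃ C : ℝ, ∀ μ ∈ M, |h μ| ≤ C)
    (haff : ∀ μ ∈ M, ∀ ν ∈ M, ∀ a b : ℝ, 0 ≤ a → 0 ≤ b → a + b = 1 →
      h (a • μ + b • ν) = a * h μ + b * h ν)
    (husc : UpperSemicontinuousOn h M)
    (f : C(Ω, ℝ))
    (P : C(Ω, ℝ) → ℝ)
    (hP : ∀ g : C(Ω, ℝ), P g = sSup ((fun μ : WeakDual ℝ C(Ω, ℝ) => μ g + h μ) '' M))
    (Qstar : WeakDual ℝ C(Ω, ℝ) → EReal)
    (hQ : ∀ μ : WeakDual ℝ C(Ω, ℝ),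
      Qstar μ = ⨆ g : C(Ω, ℝ), (((μ g - (P (f + g) - P f) : ℝ)) : EReal))
    (d : ℕ) (S : Fin d → C(Ω, ℝ))
    :
    ∀ (LSstar : (Fin d → ℝ) → EReal),
      (∀ x : Fin d → ℝ, LSstar x = ⨆ t : Fin d → ℝ,
        ((((∑ i, t i * x i) - (P (f + ∑ i, t i • S i) - P f) : ℝ)) : EReal)) →
      ∀ (x t : Fin d → ℝ),
        (∀ y : Fin d → ℝ,
          LSstar x + (((∑ i, t i * (y i - x i) : ℝ)) : EReal) ≤ LSstar y) →
        ∃ μ ∈ M, (∀ i, μ (S i) = x i) ∧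
          μ (f + ∑ i, t i • S i) + h μ = P (f + ∑ i, t i • S i) ∧
          LSstar x = Qstar μ := by
  intro LSstar hLS x t hsub
  classical
  -- expansion of evaluation
  have hexp : ∀ (s : Fin d → ℝ) (μ : WeakDual ℝ C(Ω, ℝ)),
      μ (f + ∑ i, s i • S i) = μ f + ∑ i, s i * μ (S i) := by
    intro s μ
    rw [map_add, map_sum]
    simp [smul_eq_mul]
  -- upper semicontinuity of the functional to maximize
  have huscJ : ∀ g : C(Ω, ℝ), UpperSemicontinuousOn (fun μ : WeakDual ℝ C(Ω, ℝ) => μ g + h μ) M :=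
    fun g => ((WeakDual.eval_continuous g).continuousOn.upperSemicontinuousOn).add husc
  -- attained maximum
  have hmax : ∀ g : C(Ω, ℝ), ∃ μ ∈ M, (∀ ν ∈ M, ν g + h ν ≤ μ g + h μ) ∧ P g = μ g + h μ := by
    intro g
    obtain ⟨μ, hμM, hmx⟩ := usc_max hcomp hne (huscJ g)
    refine ⟨μ, hμM, hmx, ?_⟩
    rw [hP g]
    apply IsGreatest.csSup_eq
    constructor
    · exact ⟨μ, hμM, rfl⟩
    · rintro y ⟨ν, hν, rfl⟩
      exact hmx ν hν
  have hPle : ∀ g : C(Ω, ℝ), ∀ μ ∈ M, μ g + h μ ≤ P g := by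
    intro g μ hμ
    obtain ⟨ν, hνM, hm, he⟩ := hmax g
    rw [he]
    exact hm μ hμ
  set c := P (f + ∑ i, t i • S i) with hc
  -- fixed equilibrium state ν₀
  obtain ⟨ν₀, hν₀M, hν₀max, hν₀P⟩ := hmax (f + ∑ i, t i • S i)
  have hν₀eq : ν₀ f + (∑ i, t i * ν₀ (S i)) + h ν₀ = c := by
    rw [hc, hν₀P, hexp]
  -- F4 : terms below LSstar x
  have hF4 : ∀ s : Fin d → ℝ,
      (((∑ i, s i * x i) - (P (f + ∑ i, s i • S i) - P f) : ℝ) : EReal) ≤ LSstar x := by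
    intro s
    rw [hLS x]
    exact le_iSup (fun s : Fin d → ℝ =>
      ((((∑ i, s i * x i) - (P (f + ∑ i, s i • S i) - P f) : ℝ)) : EReal)) s
  -- F3 : LSstar at image points
  have hF3 : ∀ μ ∈ M, LSstar (fun i => μ (S i)) ≤ ((P f - μ f - h μ : ℝ) : EReal) := by
    intro μ hμ
    rw [hLS]
    refine iSup_le fun s => ?_
    rw [EReal.coe_le_coe_iff]
    have h1 := hPle (f + ∑ i, s i • S i) μ hμ
    rw [hexp] at h1
    linarith
  -- LSstar x is finite
  obtain ⟨μ₀, hμ₀⟩ := hne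
  have hnetop : LSstar x ≠ ⊤ := by
    intro htop
    have hx0 := hsub (fun i => μ₀ (S i))
    rw [htop, EReal.top_add_coe] at hx0
    exact absurd (hx0.trans (hF3 μ₀ hμ₀)) (not_le.2 (EReal.coe_lt_top _))
  have hnebot : LSstar x ≠ ⊥ := by
    intro hbot
    have := hF4 t
    rw [hbot] at this
    exact absurd this (not_le.2 (EReal.bot_lt_coe _))
  set ℓ := (LSstar x).toReal with hℓdef
  have hℓ : (ℓ : EReal) = LSstar x := EReal.coe_toReal hnetop hnebot
  -- key subgradient inequality, real form
  have hkey : ∀ μ ∈ M, ℓ + ∑ i, t i * (μ (S i) - x i) ≤ P f - μ f - h μ := by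
    intro μ hμ
    have h1 := hsub (fun i => μ (S i))
    rw [← hℓ, ← EReal.coe_add] at h1
    exact EReal.coe_le_coe_iff.1 (h1.trans (hF3 μ hμ))
  have hF4R : ∀ s : Fin d → ℝ,
      (∑ i, s i * x i) - (P (f + ∑ i, s i • S i) - P f) ≤ ℓ := by
    intro s
    have := hF4 s
    rw [← hℓ] at this
    exact EReal.coe_le_coe_iff.1 this
  -- Fenchel equality
  have hℓeq : ℓ = (∑ i, t i * x i) - (c - P f) := by
    have h1 := hkey ν₀ hν₀M
    have h2 : ∑ i, t i * (ν₀ (S i) - x i)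
        = (∑ i, t i * ν₀ (S i)) - ∑ i, t i * x i := by
      rw [← Finset.sum_sub_distrib]
      exact Finset.sum_congr rfl fun i _ => by ring
    have h3 := hF4R t
    rw [← hc] at h3
    rw [h2] at h1
    linarith

  -- |μ g| ≤ ‖g‖ for μ ∈ M
  have habs : ∀ μ ∈ M, ∀ g : C(Ω, ℝ), |μ g| ≤ ‖g‖ := by
    intro μ hμ g
    obtain ⟨h1, hpos⟩ := hprob μ hμ
    have hptw : ∀ ω : Ω, |g ω| ≤ ‖g‖ := fun ω => by
      rw [← Real.norm_eq_abs]; exact g.norm_coe_le_norm ω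
    have hub : μ g ≤ ‖g‖ := by
      have h2 := hpos (‖g‖ • 1 - g) (fun ω => by
        simp only [ContinuousMap.sub_apply, ContinuousMap.smul_apply, ContinuousMap.one_apply,
          smul_eq_mul, mul_one]
        have := abs_le.1 (hptw ω)
        linarith [this.2])
      rw [map_sub, map_smul, h1, smul_eq_mul, mul_one] at h2
      linarith
    have hlb : -‖g‖ ≤ μ g := by
      have h2 := hpos (g + ‖g‖ • 1) (fun ω => by
        simp only [ContinuousMap.add_apply, ContinuousMap.smul_apply, ContinuousMap.one_apply,
          smul_eq_mul, mul_one]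
        have := abs_le.1 (hptw ω)
        linarith [this.1])
      rw [map_add, map_smul, h1, smul_eq_mul, mul_one] at h2
      linarith
    exact abs_le.2 ⟨hlb, hub⟩
  -- equilibrium states
  set E : Set (WeakDual ℝ C(Ω, ℝ)) :=
    {μ | μ ∈ M ∧ c ≤ μ (f + ∑ i, t i • S i) + h μ} with hE
  have hEclosed : IsClosed E := usc_superlevel_closed hcomp.isClosed (huscJ _) c
  have hEcomp : IsCompact E := hcomp.of_isClosed_subset hEclosed (fun μ hμ => hμ.1)
  have hEconv : Convex ℝ E := by
    intro μ hμ ν hν a b ha hb hab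
    refine ⟨hconv hμ.1 hν.1 ha hb hab, ?_⟩
    have hval : (a • μ + b • ν) (f + ∑ i, t i • S i)
        = a * μ (f + ∑ i, t i • S i) + b * ν (f + ∑ i, t i • S i) := rfl
    rw [hval, haff μ hμ.1 ν hν.1 a b ha hb hab]
    have hcc : a * c + b * c = c := by rw [← add_mul, hab, one_mul]
    linarith [mul_le_mul_of_nonneg_left hμ.2 ha, mul_le_mul_of_nonneg_left hν.2 hb]
  have hpScont : Continuous (fun μ : WeakDual ℝ C(Ω, ℝ) => fun i => μ (S i)) :=
    continuous_pi fun i => WeakDual.eval_continuous (S i)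
  set K : Set (Fin d → ℝ) := (fun μ : WeakDual ℝ C(Ω, ℝ) => fun i => μ (S i)) '' E with hK
  have hKcomp : IsCompact K := hEcomp.image hpScont
  have hKconv : Convex ℝ K := by
    have hlin : IsLinearMap ℝ (fun μ : WeakDual ℝ C(Ω, ℝ) => fun i => μ (S i)) := by
      constructor
      · intro μ ν; funext i; rfl
      · intro a μ; funext i; rfl
    exact hEconv.is_linear_image hlin
  have hxK : x ∈ K := by
    by_contra hxKn
    obtain ⟨φ, u, hφK, hφx⟩ := geometric_hahn_banach_closed_point hKconv hKcomp.isClosed hxKn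
    set sv : Fin d → ℝ := fun i => φ (fun j => if i = j then 1 else 0) with hsv
    have hφ : ∀ y : Fin d → ℝ, φ y = ∑ i, y i * sv i := by
      intro y
      have h1 := LinearMap.pi_apply_eq_sum_univ (φ : (Fin d → ℝ) →ₗ[ℝ] ℝ) y
      simpa [smul_eq_mul] using h1
    set B := ∑ i, |sv i| * ‖S i‖ with hB
    have hB0 : 0 ≤ B := Finset.sum_nonneg fun i _ => mul_nonneg (abs_nonneg _) (norm_nonneg _)
    have hbound : ∀ μ ∈ M, |∑ i, sv i * μ (S i)| ≤ B := by
      intro μ hμ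
      calc |∑ i, sv i * μ (S i)| ≤ ∑ i, |sv i * μ (S i)| := Finset.abs_sum_le_sum_abs _ _
        _ ≤ ∑ i, |sv i| * ‖S i‖ := Finset.sum_le_sum fun i _ => by
            rw [abs_mul]
            exact mul_le_mul_of_nonneg_left (habs μ hμ (S i)) (abs_nonneg _)
    have hsplit : ∀ (ε : ℝ) (z : Fin d → ℝ),
        ∑ i, (t i + ε * sv i) * z i = (∑ i, t i * z i) + ε * ∑ i, sv i * z i := by
      intro ε z
      rw [Finset.mul_sum, ← Finset.sum_add_distrib]
      exact Finset.sum_congr rfl fun i _ => by ring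
    -- Danskin-type estimate
    have hDan : ∀ ε : ℝ, 0 < ε → ∃ μ ∈ M,
        c - ε * (2 * B) ≤ μ (f + ∑ i, t i • S i) + h μ ∧
        (∑ i, sv i * x i) ≤ ∑ i, sv i * μ (S i) := by
      intro ε hε
      obtain ⟨μ, hμM, hμmax, hμP⟩ := hmax (f + ∑ i, (t i + ε * sv i) • S i)
      have hexpμ : μ (f + ∑ i, (t i + ε * sv i) • S i)
          = μ f + ((∑ i, t i * μ (S i)) + ε * ∑ i, sv i * μ (S i)) := by
        rw [hexp (fun i => t i + ε * sv i) μ, hsplit ε (fun i => μ (S i))]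
      have hexpν : ν₀ (f + ∑ i, (t i + ε * sv i) • S i)
          = ν₀ f + ((∑ i, t i * ν₀ (S i)) + ε * ∑ i, sv i * ν₀ (S i)) := by
        rw [hexp (fun i => t i + ε * sv i) ν₀, hsplit ε (fun i => ν₀ (S i))]
      have hA : μ f + (∑ i, t i * μ (S i)) + h μ ≤ c := by
        have h1 := hPle (f + ∑ i, t i • S i) μ hμM
        rw [hexp] at h1
        rw [hc]
        linarith
      have hgeν := hμmax ν₀ hν₀M
      rw [hexpμ, hexpν] at hgeν
      have hb1 := abs_le.1 (hbound μ hμM)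
      have hb2 := abs_le.1 (hbound ν₀ hν₀M)
      refine ⟨μ, hμM, ?_, ?_⟩
      · rw [hexp]
        nlinarith [mul_le_mul_of_nonneg_left hb2.1 hε.le,
          mul_le_mul_of_nonneg_left hb1.2 hε.le]
      · have h1 := hF4R (fun i => t i + ε * sv i)
        rw [hsplit ε x, hμP, hexpμ, hℓeq] at h1
        have h2 : ε * (∑ i, sv i * x i) ≤ ε * ∑ i, sv i * μ (S i) := by linarith
        exact le_of_mul_le_mul_left h2 hε
    -- nested compact sets
    set G : WeakDual ℝ C(Ω, ℝ) → ℝ := fun μ => ∑ i, sv i * μ (S i) with hG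
    have hGcont : Continuous G := continuous_finset_sum _ fun i _ =>
      continuous_const.mul (WeakDual.eval_continuous (S i))
    set Cs : ℕ → Set (WeakDual ℝ C(Ω, ℝ)) := fun n =>
      {μ | μ ∈ M ∧ c - 1 / (n + 1) ≤ μ (f + ∑ i, t i • S i) + h μ} ∩
        {μ | (∑ i, sv i * x i) ≤ G μ} with hCs
    have hCclosed : ∀ n, IsClosed (Cs n) := fun n =>
      (usc_superlevel_closed hcomp.isClosed (huscJ _) _).inter
        (isClosed_le continuous_const hGcont)
    have hCsub : ∀ n, Cs n ⊆ M := fun n μ hμ => hμ.1.1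
    have hCanti : ∀ n, Cs (n + 1) ⊆ Cs n := by
      intro n μ hμ
      refine ⟨⟨hμ.1.1, le_trans ?_ hμ.1.2⟩, hμ.2⟩
      have h1 : (1 : ℝ) / (n + 1 + 1) ≤ 1 / (n + 1) := by
        apply one_div_le_one_div_of_le
        · positivity
        · push_cast; linarith
      push_cast
      linarith
    have hCne : ∀ n, (Cs n).Nonempty := by
      intro n
      have hpos : (0:ℝ) < 1 / ((n:ℝ) + 1) := by positivity
      have hden : (0:ℝ) < 2 * B + 1 := by linarith
      set ε := (1 / ((n:ℝ) + 1)) / (2 * B + 1) with hεdef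
      have hε : 0 < ε := by positivity
      obtain ⟨μ, hμM, hμ1, hμ2⟩ := hDan ε hε
      refine ⟨μ, ⟨hμM, le_trans ?_ hμ1⟩, hμ2⟩
      have hle : ε * (2 * B) ≤ 1 / ((n:ℝ) + 1) := by
        rw [hεdef, div_mul_eq_mul_div, div_le_iff₀ hden]
        exact mul_le_mul_of_nonneg_left (by linarith) hpos.le
      linarith
    obtain ⟨μs, hμs⟩ := IsCompact.nonempty_iInter_of_sequence_nonempty_isCompact_isClosed Cs
      hCanti hCne (hcomp.of_isClosed_subset (hCclosed 0) (hCsub 0)) hCclosed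
    simp only [Set.mem_iInter] at hμs
    have hμsM : μs ∈ M := (hμs 0).1.1
    have hμsE : c ≤ μs (f + ∑ i, t i • S i) + h μs := by
      by_contra hltc
      push_neg at hltc
      obtain ⟨n, hn⟩ := exists_nat_one_div_lt
        (show (0:ℝ) < c - (μs (f + ∑ i, t i • S i) + h μs) by linarith)
      have h1 := (hμs n).1.2
      linarith
    have hμsK : (fun i => μs (S i)) ∈ K := ⟨μs, ⟨hμsM, hμsE⟩, rfl⟩
    have h5 := hφK _ hμsK
    have h6 : φ x ≤ φ (fun i => μs (S i)) := by
      rw [hφ, hφ]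
      calc ∑ i, x i * sv i = ∑ i, sv i * x i :=
            Finset.sum_congr rfl fun i _ => mul_comm _ _
        _ ≤ ∑ i, sv i * μs (S i) := (hμs 0).2
        _ = ∑ i, μs (S i) * sv i := Finset.sum_congr rfl fun i _ => mul_comm _ _
    linarith
  -- conclusion
  obtain ⟨μ, hμE, hμx⟩ := hxK
  have hμM : μ ∈ M := hμE.1
  have hμSx : ∀ i, μ (S i) = x i := fun i => congrFun hμx i
  have hμeq : μ (f + ∑ i, t i • S i) + h μ = c :=
    le_antisymm (by rw [hc]; exact hPle _ μ hμM) hμE.2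
  have hsum : ∑ i, t i * μ (S i) = ∑ i, t i * x i :=
    Finset.sum_congr rfl fun i _ => by rw [hμSx i]
  have hreal : μ f + (∑ i, t i * x i) + h μ = c := by
    have h1 := hμeq
    rw [hexp, hsum] at h1
    exact h1
  refine ⟨μ, hμM, hμSx, hμeq, ?_⟩
  have hQμ : Qstar μ = ((P f - μ f - h μ : ℝ) : EReal) := by
    rw [hQ μ]
    apply le_antisymm
    · refine iSup_le fun g => ?_
      rw [EReal.coe_le_coe_iff]
      have h1 := hPle (f + g) μ hμM
      rw [map_add] at h1
      linarith
    · have h2 := le_iSup (fun g : C(Ω, ℝ) => ((μ g - (P (f + g) - P f) : ℝ) : EReal))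
        (∑ i, t i • S i)
      refine le_trans (le_of_eq ?_) h2
      norm_cast
      have h3 : μ (∑ i, t i • S i) = ∑ i, t i * μ (S i) := by
        rw [map_sum]; simp [smul_eq_mul]
      have h4 : μ (f + ∑ i, t i • S i) = μ f + μ (∑ i, t i • S i) := map_add μ _ _
      rw [h3, hsum]
      have h5 : P (f + ∑ i, t i • S i) = c := hc.symm
      rw [h5]
      linarith
  rw [← hℓ, hQμ]
  norm_cast
  linarith [hℓeq, hreal]
end

section
/- Let L : ℝ^d → ℝ be a convex function that is finite everywhere (hence continuous), and let L* be its Fenchel–Legendre transform. For every x in the effective domain of L*, there exists a sequence (x_m) in ℝ^d such that ∂L*(x_m) ≠ ∅ for all m, x_m → x, and L*(x_m) → L*(x). -/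
/-!
Minimise `L*(y) + (m + 1) ‖y - x‖²`. The penalty makes this coercive (`L* ≥ -L 0`) and `L*` is
lower semicontinuous, so a minimiser `x_m` exists. Comparing with the value at `x` gives
`L*(x_m) ≤ L*(x)` and `‖x_m - x‖² = O(1/m)`, and lower semicontinuity then yields
`L*(x_m) → L*(x)`. Finally, at a minimiser of a convex function plus a smooth penalty the
penalty's gradient `2 (m + 1) (x - x_m)` is a subgradient of the convex function.
-/

open Filter Topology
open scoped InnerProductSpace

section iSup

variable {E ι : Type*} [AddCommGroup E] [Module ℝ E]

theorem convexOn_toReal_iSup_coe [Nonempty ι] {φ : ι → E → ℝ}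
    (hφ : ∀ i, ConvexOn ℝ Set.univ (φ i)) :
    ConvexOn ℝ {y | ⨆ i, (φ i y : EReal) ≠ ⊤} fun y => (⨆ i, (φ i y : EReal)).toReal := by
  set f : E → EReal := fun y => ⨆ i, (φ i y : EReal)
  have hf : ∀ y, f y ≠ ⊤ → f y = ((f y).toReal : EReal) := fun y hy =>
    (EReal.coe_toReal hy (ne_bot_of_le_ne_bot (EReal.coe_ne_bot (φ (Classical.arbitrary ι) y))
      (le_iSup (fun i => (φ i y : EReal)) _))).symm
  have hcomb : ∀ y ∈ {y | f y ≠ ⊤}, ∀ w ∈ {y | f y ≠ ⊤}, ∀ a b : ℝ,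
      0 ≤ a → 0 ≤ b → a + b = 1 →
      f (a • y + b • w) ≤ ((a * (f y).toReal + b * (f w).toReal : ℝ) : EReal) := by
    intro y hy w hw a b ha hb hab
    refine iSup_le fun i => EReal.coe_le_coe_iff.2 ?_
    have hyi : φ i y ≤ (f y).toReal :=
      EReal.coe_le_coe_iff.1 <| (le_iSup (fun j => (φ j y : EReal)) i).trans_eq (hf y hy)
    have hwi : φ i w ≤ (f w).toReal :=
      EReal.coe_le_coe_iff.1 <| (le_iSup (fun j => (φ j w : EReal)) i).trans_eq (hf w hw)
    calc φ i (a • y + b • w) ≤ a * φ i y + b * φ i w :=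
          (hφ i).2 (Set.mem_univ _) (Set.mem_univ _) ha hb hab
      _ ≤ a * (f y).toReal + b * (f w).toReal := by gcongr
  refine ⟨fun y hy w hw a b ha hb hab => ?_, fun y hy w hw a b ha hb hab => ?_⟩
  · exact ne_top_of_le_ne_top (EReal.coe_ne_top _) (hcomb y hy w hw a b ha hb hab)
  · have h := hcomb y hy w hw a b ha hb hab
    rw [hf _ (ne_top_of_le_ne_top (EReal.coe_ne_top _) h)] at h
    exact EReal.coe_le_coe_iff.1 h

end iSup

section Proximal

variable {E : Type*} [NormedAddCommGroup E]

theorem exists_forall_add_sq_norm_le [ProperSpace E] {f : E → EReal}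
    (hf : LowerSemicontinuous f) {b : ℝ} (hb : ∀ y, (b : EReal) ≤ f y) {x : E} (hx : f x ≠ ⊤)
    {c : ℝ} (hc : 0 < c) :
    ∃ z, ∀ y, f z + ((c * ‖z - x‖ ^ 2 : ℝ) : EReal) ≤ f y + ((c * ‖y - x‖ ^ 2 : ℝ) : EReal) := by
  set F : E → EReal := fun y => f y + ((c * ‖y - x‖ ^ 2 : ℝ) : EReal)
  have hF : LowerSemicontinuous F :=
    hf.add' (continuous_coe_real_ereal.comp (by fun_prop)).lowerSemicontinuous fun y =>
      EReal.continuousAt_add (Or.inr (EReal.coe_ne_bot _)) (Or.inr (EReal.coe_ne_top _))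
  set R : ℝ := |(f x).toReal - b| / c + 1
  have hR : (f x).toReal < b + c * R ^ 2 := by
    have h1 : 1 ≤ R := le_add_of_nonneg_left (by positivity)
    have h2 : c * R = |(f x).toReal - b| + c := by simp only [R]; field_simp
    calc (f x).toReal < b + (|(f x).toReal - b| + c) := by
          linarith [le_abs_self ((f x).toReal - b)]
      _ = b + c * R := by rw [h2]
      _ ≤ b + c * R ^ 2 := by nlinarith [mul_le_mul_of_nonneg_left h1 (by positivity : 0 ≤ c * R)]
  obtain ⟨z, -, hz⟩ := (hF.lowerSemicontinuousOn _).exists_isMinOn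
    (Metric.nonempty_closedBall.2 (by positivity)) (isCompact_closedBall x R)
  refine ⟨z, fun y => ?_⟩
  by_cases hy : y ∈ Metric.closedBall x R
  · exact hz hy
  have hRy : R < ‖y - x‖ := by simpa [dist_eq_norm] using hy
  calc F z ≤ f x := by simpa [F] using hz (Metric.mem_closedBall_self (by positivity : 0 ≤ R))
    _ = ((f x).toReal : EReal) :=
        (EReal.coe_toReal hx (ne_bot_of_le_ne_bot (EReal.coe_ne_bot b) (hb x))).symm
    _ ≤ ((b + c * ‖y - x‖ ^ 2 : ℝ) : EReal) := by
        refine EReal.coe_le_coe_iff.2 (hR.le.trans ?_)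
        gcongr
    _ ≤ F y := by
        rw [EReal.coe_add]
        exact add_le_add_left (hb y) _

variable [InnerProductSpace ℝ E]

theorem ConvexOn.add_inner_le_of_isMinOn_add_sq_norm {f : E → ℝ} {s : Set E}
    (hf : ConvexOn ℝ s f) {c : ℝ} {x z y : E} (hz : z ∈ s) (hy : y ∈ s)
    (hmin : IsMinOn (fun w => f w + c * ‖w - x‖ ^ 2) s z) :
    f z + ⟪(2 * c) • (x - z), y - z⟫_ℝ ≤ f y := by
  have hstep : ∀ r ∈ Set.Ioc (0 : ℝ) 1,
      f z ≤ f y + 2 * c * ⟪z - x, y - z⟫_ℝ + r * (c * ‖y - z‖ ^ 2) := by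
    rintro r ⟨hr0, hr1⟩
    have hconv := hf.2 hz hy (sub_nonneg.2 hr1) hr0.le (sub_add_cancel 1 r)
    have hseg : (1 - r) • z + r • y = z + r • (y - z) := by
      rw [smul_sub, sub_smul, one_smul]; abel
    have hnorm : ‖(1 - r) • z + r • y - x‖ ^ 2
        = ‖z - x‖ ^ 2 + 2 * r * ⟪z - x, y - z⟫_ℝ + r ^ 2 * ‖y - z‖ ^ 2 := by
      rw [hseg, add_sub_right_comm, norm_add_sq_real, inner_smul_right, norm_smul,
        Real.norm_eq_abs, abs_of_pos hr0]
      ring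
    have hle : f z + c * ‖z - x‖ ^ 2
        ≤ f ((1 - r) • z + r • y) + c * ‖(1 - r) • z + r • y - x‖ ^ 2 :=
      hmin (hf.1 hz hy (sub_nonneg.2 hr1) hr0.le (sub_add_cancel 1 r))
    rw [hnorm] at hle
    simp only [smul_eq_mul] at hconv
    have : r * f z ≤ r * (f y + 2 * c * ⟪z - x, y - z⟫_ℝ + r * (c * ‖y - z‖ ^ 2)) := by
      nlinarith
    exact le_of_mul_le_mul_left this hr0
  have hlim : Tendsto (fun r => f y + 2 * c * ⟪z - x, y - z⟫_ℝ + r * (c * ‖y - z‖ ^ 2))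
      (𝓝[>] 0) (𝓝 (f y + 2 * c * ⟪z - x, y - z⟫_ℝ)) := by
    have : Tendsto (fun r : ℝ => r) (𝓝[>] 0) (𝓝 0) := nhdsWithin_le_nhds
    simpa using tendsto_const_nhds.add (this.mul_const (c * ‖y - z‖ ^ 2))
  have hev : ∀ᶠ r in 𝓝[>] (0 : ℝ), r ∈ Set.Ioc (0 : ℝ) 1 := Ioc_mem_nhdsGT one_pos
  have := ge_of_tendsto hlim (hev.mono hstep)
  rw [inner_smul_left, ← neg_sub z x, inner_neg_left]
  simp only [RCLike.conj_to_real]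
  linarith

def HasSubgradientAt (f : E → EReal) (t x : E) : Prop :=
  ∀ y, f x + ((⟪t, y - x⟫_ℝ : ℝ) : EReal) ≤ f y

theorem hasSubgradientAt_of_forall_add_sq_norm_le {f : E → EReal} (hbot : ∀ y, f y ≠ ⊥)
    (hconv : ConvexOn ℝ {y | f y ≠ ⊤} fun y => (f y).toReal) {c : ℝ} {x z : E} (hz : f z ≠ ⊤)
    (hmin : ∀ y, f z + ((c * ‖z - x‖ ^ 2 : ℝ) : EReal) ≤ f y + ((c * ‖y - x‖ ^ 2 : ℝ) : EReal)) :
    HasSubgradientAt f ((2 * c) • (x - z)) z := by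
  intro y
  rcases eq_or_ne (f y) ⊤ with hy | hy
  · simp [hy]
  have hreal : ∀ w, f w ≠ ⊤ → f w = ((f w).toReal : EReal) := fun w hw =>
    (EReal.coe_toReal hw (hbot w)).symm
  have hminOn : IsMinOn (fun w => (f w).toReal + c * ‖w - x‖ ^ 2) {y | f y ≠ ⊤} z := by
    intro w hw
    have h := hmin w
    rw [hreal z hz, hreal w hw] at h
    exact_mod_cast h
  rw [hreal z hz, hreal y hy]
  exact_mod_cast hconv.add_inner_le_of_isMinOn_add_sq_norm hz hy hminOn

/- Convexity of an `EReal`-valued `f` is expressed as convexity of its real values on the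
effective domain `{y | f y ≠ ⊤}`, which also makes that domain convex. -/
theorem exists_seq_hasSubgradientAt_tendsto [FiniteDimensional ℝ E] {f : E → EReal}
    (hf : LowerSemicontinuous f) {b : ℝ} (hb : ∀ y, (b : EReal) ≤ f y)
    (hconv : ConvexOn ℝ {y | f y ≠ ⊤} fun y => (f y).toReal) {x : E} (hx : f x ≠ ⊤) :
    ∃ u : ℕ → E, (∀ m, f (u m) ≠ ⊤ ∧ ∃ t, HasSubgradientAt f t (u m)) ∧
      Tendsto u atTop (𝓝 x) ∧ Tendsto (fun m => f (u m)) atTop (𝓝 (f x)) := by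
  have hbot : ∀ y, f y ≠ ⊥ := fun y => ne_bot_of_le_ne_bot (EReal.coe_ne_bot b) (hb y)
  have hreal : ∀ w, f w ≠ ⊤ → f w = ((f w).toReal : EReal) := fun w hw =>
    (EReal.coe_toReal hw (hbot w)).symm
  choose u hu using fun m : ℕ => exists_forall_add_sq_norm_le hf hb hx (Nat.cast_add_one_pos m)
  have hux : ∀ m, f (u m) + (((m + 1) * ‖u m - x‖ ^ 2 : ℝ) : EReal) ≤ f x := fun m => by
    simpa using hu m x
  have hle : ∀ m, f (u m) ≤ f x := fun m =>
    (le_add_of_nonneg_right (EReal.coe_nonneg.2 (by positivity))).trans (hux m)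
  have hdist : ∀ m, ‖u m - x‖ ^ 2 ≤ ((f x).toReal - b) / (m + 1) := fun m => by
    have h := (add_le_add (hb (u m)) le_rfl).trans (hux m)
    rw [hreal x hx, ← EReal.coe_add, EReal.coe_le_coe_iff] at h
    rw [le_div_iff₀ (Nat.cast_add_one_pos m)]
    linarith
  have hlim : Tendsto u atTop (𝓝 x) := by
    have hsq : Tendsto (fun m => ‖u m - x‖ ^ 2) atTop (𝓝 0) :=
      squeeze_zero (fun m => by positivity) hdist
        ((tendsto_const_div_atTop_nhds_zero_nat ((f x).toReal - b)).comp
          (tendsto_add_atTop_nat 1) |>.congr fun m => by simp)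
    rw [tendsto_iff_norm_sub_tendsto_zero]
    simpa [Real.sqrt_sq (norm_nonneg _)] using hsq.sqrt
  refine ⟨u, fun m => ⟨ne_top_of_le_ne_top hx (hle m), _,
    hasSubgradientAt_of_forall_add_sq_norm_le hbot hconv (ne_top_of_le_ne_top hx (hle m)) (hu m)⟩,
    hlim, tendsto_order.2 ⟨fun a ha => hlim.eventually (hf x a ha),
      fun a ha => Eventually.of_forall fun m => (hle m).trans_lt ha⟩⟩

end Proximal

theorem stmt12_general {d : ℕ} (L : (Fin d → ℝ) → ℝ)
    (Lstar : (Fin d → ℝ) → EReal)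
    (hLstar : ∀ x : Fin d → ℝ,
      Lstar x = ⨆ t : Fin d → ℝ, (((∑ i, t i * x i) - L t : ℝ) : EReal))
    (x : Fin d → ℝ) (hx : Lstar x ≠ ⊤) :
    ∃ u : ℕ → (Fin d → ℝ),
      (∀ m : ℕ, Lstar (u m) ≠ ⊤ ∧ ∃ t : Fin d → ℝ, ∀ y : Fin d → ℝ,
        Lstar (u m) + (((∑ i, t i * (y i - u m i)) : ℝ) : EReal) ≤ Lstar y) ∧
      Tendsto u atTop (𝓝 x) ∧
      Tendsto (fun m => Lstar (u m)) atTop (𝓝 (Lstar x)) := by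
  have hconj : Lstar = fun y => ⨆ t : Fin d → ℝ, (((∑ i, t i * y i) - L t : ℝ) : EReal) :=
    funext hLstar
  have haffine (t : Fin d → ℝ) :
      ConvexOn ℝ Set.univ fun y : Fin d → ℝ => (∑ i, t i * y i) - L t := by
    simp only [sub_eq_add_neg]
    exact ((dotProductBilin ℝ ℝ t).convexOn convex_univ).add_const (-L t)
  have hlsc : LowerSemicontinuous Lstar := hconj ▸ lowerSemicontinuous_iSup fun t =>
    (continuous_coe_real_ereal.comp (by fun_prop)).lowerSemicontinuous
  have hconv : ConvexOn ℝ {y | Lstar y ≠ ⊤} fun y => (Lstar y).toReal :=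
    hconj ▸ convexOn_toReal_iSup_coe haffine
  have hbound : ∀ y, ((-L 0 : ℝ) : EReal) ≤ Lstar y := fun y => by
    simpa [hLstar y] using le_iSup (fun t => (((∑ i, t i * y i) - L t : ℝ) : EReal)) 0
  -- on `EuclideanSpace ℝ (Fin d)` the pairing `∑ i, t i * y i` is the inner product
  let e := WithLp.linearEquiv 2 ℝ (Fin d → ℝ)
  obtain ⟨u, hsub, hu, hLu⟩ := exists_seq_hasSubgradientAt_tendsto (f := Lstar ∘ e)
    (hlsc.comp (PiLp.continuous_ofLp 2 _)) (fun y => hbound (e y))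
    (hconv.comp_linearMap e.toLinearMap) (x := WithLp.toLp 2 x) hx
  refine ⟨fun m => e (u m), fun m => ?_, (PiLp.continuous_ofLp 2 _).tendsto _ |>.comp hu, hLu⟩
  obtain ⟨hfin, t, ht⟩ := hsub m
  refine ⟨hfin, e t, fun y => ?_⟩
  simpa [e, WithLp.coe_linearEquiv, EuclideanSpace.inner_eq_star_dotProduct, dotProduct,
    mul_comm] using ht (WithLp.toLp 2 y)

/-- Finite-dimensional Brøndsted–Rockafellar: for a finite-valued convex `L : ℝ^d → ℝ` and its
Fenchel–Legendre transform `L*`, every point `x` of the effective domain of `L*` is the limit of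
a sequence `x_m` of points with nonempty subdifferential `∂L*(x_m)`, with `L*(x_m) → L*(x)`. -/
theorem stmt12 {d : ℕ} (L : (Fin d → ℝ) → ℝ) (hconv : ConvexOn ℝ Set.univ L)
    (Lstar : (Fin d → ℝ) → EReal)
    (hLstar : ∀ x : Fin d → ℝ,
      Lstar x = ⨆ t : Fin d → ℝ, (((∑ i, t i * x i) - L t : ℝ) : EReal))
    (x : Fin d → ℝ) (hx : Lstar x ≠ ⊤) :
    ∃ u : ℕ → (Fin d → ℝ),
      (∀ m : ℕ, Lstar (u m) ≠ ⊤ ∧ ∃ t : Fin d → ℝ, ∀ y : Fin d → ℝ,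
        Lstar (u m) + (((∑ i, t i * (y i - u m i)) : ℝ) : EReal) ≤ Lstar y) ∧
      Tendsto u atTop (𝓝 x) ∧
      Tendsto (fun m => Lstar (u m)) atTop (𝓝 (Lstar x)) :=
  stmt12_general L Lstar hLstar x hx
end

section
/- Main theorem: Let Ω be a nonempty compact metrizable space, M^τ(Ω) a nonempty compact convex subset of Borel probability measures on Ω (weak* topology), and h^τ : M^τ(Ω) → ℝ bounded, affine, and upper semicontinuous; set P^τ(g) = sup_{μ∈M^τ(Ω)}(μ(g)+h^τ(μ)). Fix f ∈ C(Ω) and suppose there is a vector subspace V dense in C(Ω) such that for every g ∈ V the function f+g has a unique equilibrium state. Then for every μ ∈ M^τ(Ω) there exists a sequence (μ_n, g_n) in M^τ(Ω) × V such that μ_n → μ weak*, h^τ(μ_n) → h^τ(μ), and for each n, μ_n is the (unique) equilibrium state of f + g_n. -/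
/-!
Write `c ν = ν f + h ν`, so that `g ↦ P (f + g) = sup_{ν ∈ M} (ν g + c ν)` is convex and
1-Lipschitz. Since `c` is concave and upper semicontinuous, separating `(μ, c μ + δ)` from the
hypograph of `c` shows that `c μ = inf_g (P (f + g) - μ g)`, i.e. every `μ ∈ M` is a
`δ`-subgradient of the pressure at some `g₀ ∈ V`. On a finite-dimensional affine subspace
`g₀ + span ψ ⊆ V`, minimising the pressure minus `μ` plus half the squared norm yields a point `g`
within `√(2δ)` of `g₀` at which a `√(2δ)`-perturbation of `μ` is a proximal subgradient. Uniqueness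
of the equilibrium state `ν` at `g` bounds the one-sided directional derivatives of the pressure by
`ν`, which forces that subgradient to be `ν`. So `ν` is `√(2δ)`-close to `μ` on `ψ` and
`c ν ≥ c μ - √(2δ)`; letting `ψ` exhaust a dense sequence in `V` gives weak* convergence, and upper
semicontinuity of `c` upgrades `liminf c ν_n ≥ c μ` to convergence.
-/

open Filter Topology Set
open scoped InnerProductSpace

variable {E : Type*} [NormedAddCommGroup E] [NormedSpace ℝ E]

noncomputable def pressure (M : Set (WeakDual ℝ E)) (c : WeakDual ℝ E → ℝ) (g : E) : ℝ :=
  sSup ((fun ν : WeakDual ℝ E => ν g + c ν) '' M)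

def IsEquilibriumState (M : Set (WeakDual ℝ E)) (c : WeakDual ℝ E → ℝ) (g : E)
    (ν : WeakDual ℝ E) : Prop :=
  ν ∈ M ∧ ν g + c ν = pressure M c g

section Pressure

variable {M : Set (WeakDual ℝ E)} {c : WeakDual ℝ E → ℝ} {g : E} {μ ν : WeakDual ℝ E}

theorem upperSemicontinuousOn_apply_add (hc : UpperSemicontinuousOn c M) (g : E) :
    UpperSemicontinuousOn (fun ν : WeakDual ℝ E => ν g + c ν) M :=
  (WeakDual.eval_continuous g).continuousOn.upperSemicontinuousOn.add hc

theorem bddAbove_apply_add_image (hM : IsCompact M) (hc : UpperSemicontinuousOn c M) (g : E) :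
    BddAbove ((fun ν : WeakDual ℝ E => ν g + c ν) '' M) := by
  rcases M.eq_empty_or_nonempty with rfl | hne
  · simp
  obtain ⟨ν₀, -, hν₀⟩ := (upperSemicontinuousOn_apply_add hc g).exists_isMaxOn hne hM
  exact ⟨_, forall_mem_image.2 hν₀⟩

theorem le_pressure (hM : IsCompact M) (hc : UpperSemicontinuousOn c M) (hν : ν ∈ M) :
    ν g + c ν ≤ pressure M c g :=
  le_csSup (bddAbove_apply_add_image hM hc g) (mem_image_of_mem _ hν)

theorem pressure_le (hne : M.Nonempty) {r : ℝ} (h : ∀ ν ∈ M, ν g + c ν ≤ r) :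
    pressure M c g ≤ r :=
  csSup_le (hne.image _) (forall_mem_image.2 h)

theorem lipschitzWith_pressure (hM : IsCompact M) (hc : UpperSemicontinuousOn c M)
    (hne : M.Nonempty) (hnorm : ∀ ν ∈ M, ∀ g, ‖ν g‖ ≤ ‖g‖) : LipschitzWith 1 (pressure M c) :=
  LipschitzWith.of_le_add fun g g' => pressure_le hne fun ν hν => by
    have h₁ := le_pressure hM hc hν (g := g')
    have h₂ := (abs_le.1 (hnorm ν hν (g - g'))).2
    have h₃ : ν g = ν g' + ν (g - g') := by rw [← map_add, add_sub_cancel]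
    rw [dist_eq_norm]
    linarith

theorem exists_pressure_sub_lt (hM : IsCompact M) (hcc : ConcaveOn ℝ M c)
    (hc : UpperSemicontinuousOn c M) (hμ : μ ∈ M) {δ : ℝ} (hδ : 0 < δ) :
    ∃ g, pressure M c g - μ g < c μ + δ := by
  have : LocallyConvexSpace ℝ (WeakDual ℝ E) := WeakBilin.locallyConvexSpace
  obtain ⟨ℓ, u, hℓμ, hℓM⟩ := geometric_hahn_banach_point_closed hcc.convex_hypograph
    ((upperSemicontinuousOn_iff_isClosed_hypograph hM.isClosed).1 hc)
    (x := (μ, c μ + δ)) fun h => by linarith [h.2]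
  obtain ⟨g, hg⟩ := LinearMap.dualEmbedding_surjective (topDualPairing ℝ E)
    (ℓ.comp (ContinuousLinearMap.inl ℝ _ ℝ))
  -- a continuous functional on `WeakDual ℝ E × ℝ` is `(ν, t) ↦ ν g + t a`
  obtain ⟨a, hℓ⟩ : ∃ a, ∀ ν t, ℓ (ν, t) = ν g + t * a := ⟨ℓ (0, 1), fun ν t => by
    have h0 : ℓ (ν, 0) = ν g := (DFunLike.congr_fun hg ν).symm
    rw [← h0, ← smul_eq_mul, ← map_smul, ← map_add, Prod.smul_mk, Prod.mk_add_mk, smul_zero,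
      add_zero, zero_add, smul_eq_mul, mul_one]⟩
  have ha : a < 0 := by
    have := hℓM (μ, c μ) ⟨hμ, le_rfl⟩
    rw [hℓ] at this hℓμ
    nlinarith
  have hdiv : ∀ x y, a⁻¹ * (x + y * a) = a⁻¹ * x + y := fun x y => by
    rw [mul_add, mul_comm y, ← mul_assoc, inv_mul_cancel₀ ha.ne, one_mul]
  refine ⟨a⁻¹ • g, ?_⟩
  have hP : pressure M c (a⁻¹ • g) ≤ a⁻¹ * u := pressure_le ⟨μ, hμ⟩ fun ν hν => by
    have := mul_lt_mul_of_neg_left (hℓM (ν, c ν) ⟨hν, le_rfl⟩) (inv_lt_zero.2 ha)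
    rw [hℓ, hdiv] at this
    rw [map_smul, smul_eq_mul]
    linarith
  have := mul_lt_mul_of_neg_left hℓμ (inv_lt_zero.2 ha)
  rw [hℓ, hdiv] at this
  rw [map_smul, smul_eq_mul]
  linarith

theorem exists_mem_pressure_sub_lt (hM : IsCompact M) (hcc : ConcaveOn ℝ M c)
    (hc : UpperSemicontinuousOn c M) (hnorm : ∀ ν ∈ M, ∀ g, ‖ν g‖ ≤ ‖g‖) {V : Set E}
    (hV : Dense V) (hμ : μ ∈ M) {δ : ℝ} (hδ : 0 < δ) :
    ∃ g ∈ V, pressure M c g - μ g < c μ + δ :=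
  hV.exists_mem_open (isOpen_lt
    ((lipschitzWith_pressure hM hc ⟨μ, hμ⟩ hnorm).continuous.sub (map_continuous μ))
    continuous_const) (exists_pressure_sub_lt hM hcc hc hμ hδ)

theorem exists_lt_pressure_forall_le_of_isCompact (hM : IsCompact M)
    (hc : UpperSemicontinuousOn c M) {K : Set (WeakDual ℝ E)} (hK : IsCompact K) (hKM : K ⊆ M)
    (hKeq : ∀ ρ ∈ K, ¬ IsEquilibriumState M c g ρ) :
    ∃ m < pressure M c g, ∀ ρ ∈ K, ρ g + c ρ ≤ m := by
  rcases K.eq_empty_or_nonempty with rfl | hne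
  · exact ⟨pressure M c g - 1, by linarith, by simp⟩
  obtain ⟨ρ₀, hρ₀, hmax⟩ := ((upperSemicontinuousOn_apply_add hc g).mono hKM).exists_isMaxOn hne hK
  exact ⟨ρ₀ g + c ρ₀, (le_pressure hM hc (hKM hρ₀)).lt_of_ne fun h => hKeq ρ₀ hρ₀ ⟨hKM hρ₀, h⟩,
    hmax⟩

theorem eventually_pressure_add_smul_le (hM : IsCompact M) (hc : UpperSemicontinuousOn c M)
    (hnorm : ∀ ν ∈ M, ∀ g, ‖ν g‖ ≤ ‖g‖) (hν : IsEquilibriumState M c g ν)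
    (huniq : ∀ ρ, IsEquilibriumState M c g ρ → ρ = ν) (u : E) {η : ℝ} (hη : 0 < η) :
    ∀ᶠ t in 𝓝[>] (0 : ℝ), pressure M c (g + t • u) ≤ pressure M c g + t * (ν u + η) := by
  obtain ⟨m, hm, hmK⟩ := exists_lt_pressure_forall_le_of_isCompact hM hc
    (hM.inter_right (isClosed_le continuous_const (WeakDual.eval_continuous u)))
    inter_subset_left (K := M ∩ {ρ | ν u + η ≤ ρ u}) fun ρ hρ hρeq => by
      have := huniq ρ hρeq ▸ hρ.2
      linarith [this.out]
  have hsmall : ∀ᶠ t in 𝓝[>] (0 : ℝ), t * (‖u‖ - (ν u + η)) < pressure M c g - m :=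
    ((continuous_id.mul continuous_const).tendsto' 0 0 (zero_mul _)).mono_left
      nhdsWithin_le_nhds |>.eventually (gt_mem_nhds (sub_pos.2 hm))
  filter_upwards [self_mem_nhdsWithin, hsmall] with t (ht : 0 < t) hsmall
  refine pressure_le ⟨ν, hν.1⟩ fun ρ hρ => ?_
  rw [map_add, map_smul, smul_eq_mul]
  by_cases hρu : ν u + η ≤ ρ u
  · have h₁ := hmK ρ ⟨hρ, hρu⟩
    have h₂ := mul_le_mul_of_nonneg_left (abs_le.1 (hnorm ρ hρ u)).2 ht.le
    linarith
  · have h₁ := le_pressure hM hc hρ (g := g)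
    have h₂ := mul_le_mul_of_nonneg_left (not_le.1 hρu).le ht.le
    linarith

end Pressure

section Proximal

variable {F : Type*} [NormedAddCommGroup F] [InnerProductSpace ℝ F]

theorem exists_proximal_subgradient [FiniteDimensional ℝ F] {q : F → ℝ} (hq : Continuous q)
    {v : F} {δ : ℝ} (hv : ∀ s, q 0 - δ + ⟪v, s⟫_ℝ ≤ q s) :
    ∃ s₀, ‖s₀‖ ^ 2 ≤ 2 * δ ∧ ∀ s, q s₀ + ⟪v - s₀, s - s₀⟫_ℝ - ‖s - s₀‖ ^ 2 / 2 ≤ q s := by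
  -- minimise `q - ⟪v, ·⟫ + ‖·‖² / 2`, which is coercive because `v` is a `δ`-subgradient at `0`
  let γ : F → ℝ := fun s => q s - ⟪v, s⟫_ℝ + ‖s‖ ^ 2 / 2
  have hγ : Continuous γ := by fun_prop
  have hcoer : Tendsto γ (cocompact F) atTop :=
    tendsto_atTop_mono (fun s => by simp only [γ, Function.comp_apply]; linarith [hv s])
      (tendsto_atTop_add_const_left _ (q 0 - δ)
        (((tendsto_pow_atTop two_ne_zero).comp tendsto_norm_cocompact_atTop).atTop_div_const
          two_pos))
  obtain ⟨s₀, hs₀⟩ := hγ.exists_forall_le hcoer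
  refine ⟨s₀, ?_, fun s => ?_⟩
  · have h0 := hs₀ 0
    simp only [γ, inner_zero_right, norm_zero] at h0
    linarith [hv s₀]
  have hs := hs₀ s
  have hsq : ‖s‖ ^ 2 = ‖s₀‖ ^ 2 + 2 * ⟪s₀, s - s₀⟫_ℝ + ‖s - s₀‖ ^ 2 := by
    simpa using norm_add_sq_real s₀ (s - s₀)
  simp only [γ, inner_sub_left, inner_sub_right] at hs hsq ⊢
  linarith

theorem eq_of_proximal_subgradient {q : F → ℝ} {s₀ w G : F}
    (hw : ∀ s, q s₀ + ⟪w, s - s₀⟫_ℝ - ‖s - s₀‖ ^ 2 / 2 ≤ q s)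
    (hG : ∀ u, ∀ η > 0, ∀ᶠ t in 𝓝[>] (0 : ℝ), q (s₀ + t • u) ≤ q s₀ + t * (⟪G, u⟫_ℝ + η)) :
    G = w := by
  have key : ∀ u, ⟪w - G, u⟫_ℝ ≤ 0 := by
    intro u
    by_contra! ha
    have hsmall : ∀ᶠ t in 𝓝[>] (0 : ℝ), t * ‖u‖ ^ 2 / 2 < ⟪w - G, u⟫_ℝ / 2 :=
      ((continuous_id.mul continuous_const).div_const 2 |>.tendsto' 0 0 (by simp)).mono_left
        nhdsWithin_le_nhds |>.eventually (gt_mem_nhds (half_pos ha))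
    obtain ⟨t, ht, hGt, hsmall⟩ :=
      (eventually_mem_nhdsWithin.and ((hG u _ (half_pos ha)).and hsmall)).exists
    have hwt := hw (s₀ + t • u)
    simp only [add_sub_cancel_left, inner_smul_right, norm_smul, Real.norm_eq_abs, mul_pow,
      sq_abs, inner_sub_left] at hwt hGt hsmall
    have := mul_lt_mul_of_pos_left hsmall ht
    linarith
  have := key (w - G)
  rw [real_inner_self_nonpos, sub_eq_zero] at this
  exact this.symm

end Proximal

theorem WeakDual.exists_inner_eq_apply {F : Type*} [NormedAddCommGroup F] [InnerProductSpace ℝ F]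
    [FiniteDimensional ℝ F] (ρ : WeakDual ℝ E) (e : F →ₗ[ℝ] E) :
    ∃ G : F, ∀ s, ρ (e s) = ⟪G, s⟫_ℝ :=
  ⟨(InnerProductSpace.toDual ℝ F).symm (LinearMap.toContinuousLinearMap ((ρ : E →ₗ[ℝ] ℝ) ∘ₗ e)),
    fun s => by simp⟩

section Approximation

variable {M : Set (WeakDual ℝ E)} {c : WeakDual ℝ E → ℝ} {μ : WeakDual ℝ E}

theorem exists_isEquilibriumState_sub_eq_inner (hM : IsCompact M) (hc : UpperSemicontinuousOn c M)
    (hnorm : ∀ ν ∈ M, ∀ g, ‖ν g‖ ≤ ‖g‖) (hμ : μ ∈ M) {g₀ : E} {δ : ℝ}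
    (hg₀ : pressure M c g₀ - μ g₀ ≤ c μ + δ) {F : Type*} [NormedAddCommGroup F]
    [InnerProductSpace ℝ F] [FiniteDimensional ℝ F] (e : F →ₗ[ℝ] E)
    (huniq : ∀ s, ∃! ν, IsEquilibriumState M c (g₀ + e s) ν) :
    ∃ s₀ : F, ‖s₀‖ ^ 2 ≤ 2 * δ ∧ ∃ ν, IsEquilibriumState M c (g₀ + e s₀) ν ∧
      ∀ s, μ (e s) - ν (e s) = ⟪s₀, s⟫_ℝ := by
  obtain ⟨v, hv⟩ := WeakDual.exists_inner_eq_apply μ e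
  let q : F → ℝ := fun s => pressure M c (g₀ + e s)
  have hq : Continuous q := (lipschitzWith_pressure hM hc ⟨μ, hμ⟩ hnorm).continuous.comp
    (continuous_const.add e.continuous_of_finiteDimensional)
  have hsub : ∀ s, q 0 - δ + ⟪v, s⟫_ℝ ≤ q s := fun s => by
    have := le_pressure hM hc hμ (g := g₀ + e s)
    simp only [q, map_zero, add_zero, map_add, hv] at this ⊢
    linarith
  obtain ⟨s₀, hs₀, hprox⟩ := exists_proximal_subgradient hq hsub
  obtain ⟨ν, hν, hνuniq⟩ := huniq s₀
  obtain ⟨G, hG⟩ := WeakDual.exists_inner_eq_apply ν e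
  have hdir : ∀ u, ∀ η > 0, ∀ᶠ t in 𝓝[>] (0 : ℝ), q (s₀ + t • u) ≤ q s₀ + t * (⟪G, u⟫_ℝ + η) :=
    fun u η hη => by
      filter_upwards [eventually_pressure_add_smul_le hM hc hnorm hν hνuniq (e u) hη] with t ht
      simpa only [q, map_add, map_smul, add_assoc, hG] using ht
  have hGv := eq_of_proximal_subgradient hprox hdir
  refine ⟨s₀, hs₀, ν, hν, fun s => ?_⟩
  rw [hv, hG, hGv, inner_sub_left]
  ring

theorem exists_isEquilibriumState_near (hM : IsCompact M) (hcc : ConcaveOn ℝ M c)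
    (hc : UpperSemicontinuousOn c M) (hnorm : ∀ ν ∈ M, ∀ g, ‖ν g‖ ≤ ‖g‖) {V : Submodule ℝ E}
    (hV : Dense (V : Set E)) (huniq : ∀ g ∈ V, ∃! ν, IsEquilibriumState M c g ν) (hμ : μ ∈ M)
    {ι : Type*} [Fintype ι] (φ : ι → E) (hφ : ∀ i, φ i ∈ V) {ε : ℝ} (hε : 0 < ε) :
    ∃ g ∈ V, ∃ ν, IsEquilibriumState M c g ν ∧ (∀ i, |ν (φ i) - μ (φ i)| ≤ ε) ∧
      c μ - ε ≤ c ν := by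
  classical
  obtain ⟨g₀, hg₀V : g₀ ∈ V, hg₀⟩ := exists_mem_pressure_sub_lt hM hcc hc hnorm hV hμ
    (by positivity : 0 < ε ^ 2 / 2)
  -- `g₀` joins the test functions so that `ν g₀` stays close to `μ g₀`
  let ψ : Option ι → E := fun o => o.elim g₀ φ
  let e : EuclideanSpace ℝ (Option ι) →ₗ[ℝ] E :=
    Fintype.linearCombination ℝ ψ ∘ₗ (WithLp.linearEquiv 2 ℝ (Option ι → ℝ)).toLinearMap
  have heV : ∀ s, e s ∈ V := fun s => by
    simp only [e, LinearMap.coe_comp, Function.comp_apply, Fintype.linearCombination_apply]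
    exact V.sum_mem fun o _ => V.smul_mem _ (by cases o <;> simp [ψ, hg₀V, hφ])
  have he : ∀ o, e (EuclideanSpace.single o 1) = ψ o := fun o => by
    simp [e]
  obtain ⟨s₀, hs₀, ν, hν, hμν⟩ := exists_isEquilibriumState_sub_eq_inner hM hc hnorm hμ hg₀.le e
    fun s => huniq _ (V.add_mem hg₀V (heV s))
  have hs₀ε : ‖s₀‖ ≤ ε := by nlinarith [norm_nonneg s₀]
  have hclose : ∀ o, |ν (ψ o) - μ (ψ o)| ≤ ε := fun o => by
    rw [abs_sub_comm, ← he, hμν]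
    simpa using (abs_real_inner_le_norm s₀ (EuclideanSpace.single o 1)).trans (by simpa using hs₀ε)
  refine ⟨g₀ + e s₀, V.add_mem hg₀V (heV s₀), ν, hν, fun i => hclose (some i), ?_⟩
  have h₁ := le_pressure hM hc hμ (g := g₀ + e s₀)
  have h₂ := hμν s₀
  have h₃ := (abs_le.1 (hclose none)).2
  have h₄ := hν.2
  rw [real_inner_self_eq_norm_sq] at h₂
  simp only [map_add, ψ, Option.elim_none] at h₁ h₃ h₄
  linarith [sq_nonneg ‖s₀‖]

theorem Dense.exists_seq_mem_denseRange {X : Type*} [TopologicalSpace X]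
    [TopologicalSpace.PseudoMetrizableSpace X] [TopologicalSpace.SeparableSpace X] {s : Set X}
    (hs : Dense s) (hne : s.Nonempty) : ∃ u : ℕ → X, (∀ n, u n ∈ s) ∧ DenseRange u := by
  obtain ⟨t, hts, htc, hst⟩ :=
    (TopologicalSpace.IsSeparable.of_separableSpace s).exists_countable_dense_subset
  have ht : Dense t := dense_closure.1 (hs.mono hst)
  have : Nonempty X := hne.to_subtype.map Subtype.val
  obtain ⟨u, rfl⟩ := htc.exists_eq_range ht.nonempty
  exact ⟨u, fun n => hts (mem_range_self n), ht⟩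

theorem WeakDual.tendsto_of_denseRange {α β : Type*} {l : Filter α} {ν : α → WeakDual ℝ E}
    {μ : WeakDual ℝ E} (hν : ∀ a g, ‖ν a g‖ ≤ ‖g‖) {φ : β → E} (hφ : DenseRange φ)
    (h : ∀ j, Tendsto (fun a => ν a (φ j)) l (𝓝 (μ (φ j)))) : Tendsto ν l (𝓝 μ) := by
  have hequi : Equicontinuous fun a (g : E) => ν a g :=
    (LipschitzWith.uniformEquicontinuous _ 1 fun a => by
      simpa using AddMonoidHomClass.lipschitz_of_bound (ν a) 1 (by simpa using hν a)).equicontinuous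
  rw [tendsto_iff_forall_eval_tendsto_topDualPairing]
  intro g
  exact (hequi.isClosed_setOfPred_tendsto (map_continuous μ)).closure_subset_iff.2
    (range_subset_iff.2 h) (hφ g)

theorem exists_seq_isEquilibriumState_tendsto [TopologicalSpace.SeparableSpace E]
    (hM : IsCompact M) (hcc : ConcaveOn ℝ M c) (hc : UpperSemicontinuousOn c M)
    (hnorm : ∀ ν ∈ M, ∀ g, ‖ν g‖ ≤ ‖g‖) {V : Submodule ℝ E} (hV : Dense (V : Set E))
    (huniq : ∀ g ∈ V, ∃! ν, IsEquilibriumState M c g ν) (hμ : μ ∈ M) :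
    ∃ (g : ℕ → E) (ν : ℕ → WeakDual ℝ E), (∀ n, g n ∈ V) ∧
      (∀ n, IsEquilibriumState M c (g n) (ν n)) ∧ Tendsto ν atTop (𝓝 μ) ∧
      Tendsto (fun n => c (ν n)) atTop (𝓝 (c μ)) := by
  obtain ⟨φ, hφV, hφ⟩ := hV.exists_seq_mem_denseRange ⟨0, V.zero_mem⟩
  have hstage (n : ℕ) := exists_isEquilibriumState_near hM hcc hc hnorm hV huniq hμ
    (fun i : Fin (n + 1) => φ i) (fun i => hφV i) (Nat.one_div_pos_of_nat (α := ℝ) (n := n))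
  choose g hgV ν hν hνφ hνc using hstage
  have hlim : Tendsto ν atTop (𝓝 μ) := by
    refine WeakDual.tendsto_of_denseRange (fun n => hnorm _ (hν n).1) hφ fun j => ?_
    rw [tendsto_iff_norm_sub_tendsto_zero]
    refine squeeze_zero' (Eventually.of_forall fun _ => norm_nonneg _) ?_
      tendsto_one_div_add_atTop_nhds_zero_nat
    filter_upwards [eventually_ge_atTop j] with n hn
    exact hνφ n ⟨j, by omega⟩
  refine ⟨g, ν, hgV, hν, hlim, tendsto_order.2 ⟨fun y hy => ?_, fun y hy => ?_⟩⟩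
  · filter_upwards [tendsto_one_div_add_atTop_nhds_zero_nat.eventually
      (gt_mem_nhds (sub_pos.2 hy))] with n hn
    linarith [hνc n]
  · exact (tendsto_nhdsWithin_iff.2 ⟨hlim, Eventually.of_forall fun n => (hν n).1⟩).eventually
      (hc μ hμ y hy)

end Approximation

theorem WeakDual.norm_apply_le_of_nonneg {X : Type*} [TopologicalSpace X] [CompactSpace X]
    (μ : WeakDual ℝ C(X, ℝ)) (h₁ : μ 1 = 1) (hpos : ∀ g : C(X, ℝ), (∀ x, 0 ≤ g x) → 0 ≤ μ g)
    (g : C(X, ℝ)) : ‖μ g‖ ≤ ‖g‖ := by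
  have hg : ∀ x, |g x| ≤ ‖g‖ := fun x => by simpa using g.norm_coe_le_norm x
  have hle := hpos (‖g‖ • 1 - g) fun x => by
    simp only [ContinuousMap.sub_apply, ContinuousMap.smul_apply, ContinuousMap.one_apply,
      smul_eq_mul, mul_one]
    linarith [(abs_le.1 (hg x)).2]
  have hge := hpos (‖g‖ • 1 + g) fun x => by
    simp only [ContinuousMap.add_apply, ContinuousMap.smul_apply, ContinuousMap.one_apply,
      smul_eq_mul, mul_one]
    linarith [(abs_le.1 (hg x)).1]
  simp only [map_sub, map_add, map_smul, h₁, smul_eq_mul, mul_one] at hle hge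
  rw [Real.norm_eq_abs, abs_le]
  constructor <;> linarith

theorem stmt13_general {Ω : Type} [TopologicalSpace Ω] [CompactSpace Ω]
    [TopologicalSpace.MetrizableSpace Ω]
    (M : Set (WeakDual ℝ C(Ω, ℝ))) (hcomp : IsCompact M)
    (hconv : Convex ℝ M)
    (hprob : ∀ μ ∈ M, μ (1 : C(Ω, ℝ)) = 1 ∧ ∀ g : C(Ω, ℝ), (∀ ω, 0 ≤ g ω) → 0 ≤ μ g)
    (h : WeakDual ℝ C(Ω, ℝ) → ℝ)
    (haff : ∀ μ ∈ M, ∀ ν ∈ M, ∀ a b : ℝ, 0 ≤ a → 0 ≤ b → a + b = 1 →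
      h (a • μ + b • ν) = a * h μ + b * h ν)
    (husc : UpperSemicontinuousOn h M)
    (P : C(Ω, ℝ) → ℝ)
    (hP : ∀ g : C(Ω, ℝ), P g = sSup ((fun μ : WeakDual ℝ C(Ω, ℝ) => μ g + h μ) '' M))
    (f : C(Ω, ℝ))
    (V : Submodule ℝ C(Ω, ℝ)) (hV : Dense (V : Set C(Ω, ℝ)))
    (huniq : ∀ g ∈ V, ∃! μ : WeakDual ℝ C(Ω, ℝ),
      μ ∈ M ∧ μ (f + g) + h μ = P (f + g)) :
    ∀ μ ∈ M, ∃ (μn : ℕ → WeakDual ℝ C(Ω, ℝ)) (gn : ℕ → C(Ω, ℝ)),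
      (∀ n, gn n ∈ V) ∧ (∀ n, μn n ∈ M) ∧
      Tendsto μn atTop (𝓝 μ) ∧
      Tendsto (fun n => h (μn n)) atTop (𝓝 (h μ)) ∧
      ∀ n, μn n (f + gn n) + h (μn n) = P (f + gn n) := by
  intro μ hμ
  let c : WeakDual ℝ C(Ω, ℝ) → ℝ := fun ν => ν f + h ν
  have hsplit : ∀ ν g, ν (f + g) + h ν = ν g + c ν := fun ν g => by
    simp only [c, map_add]
    ring
  have hPc : ∀ g, P (f + g) = pressure M c g := fun g => by simp only [hP, pressure, hsplit]
  have hcc : ConcaveOn ℝ M c := ⟨hconv, fun ν hν ρ hρ a b ha hb hab => le_of_eq <| by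
    have : (a • ν + b • ρ) f = a * ν f + b * ρ f := rfl
    simp only [c, this, haff ν hν ρ hρ a b ha hb hab, smul_eq_mul]
    ring⟩
  have hc : UpperSemicontinuousOn c M :=
    (WeakDual.eval_continuous f).continuousOn.upperSemicontinuousOn.add husc
  have hnorm : ∀ ν ∈ M, ∀ g, ‖ν g‖ ≤ ‖g‖ := fun ν hν =>
    WeakDual.norm_apply_le_of_nonneg ν (hprob ν hν).1 (hprob ν hν).2
  have huniq' : ∀ g ∈ V, ∃! ν, IsEquilibriumState M c g ν := fun g hg => by
    simpa only [IsEquilibriumState, ← hPc, ← hsplit] using huniq g hg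
  obtain ⟨g, ν, hgV, hν, hlim, hclim⟩ :=
    exists_seq_isEquilibriumState_tendsto hcomp hcc hc hnorm hV huniq' hμ
  refine ⟨ν, g, hgV, fun n => (hν n).1, hlim, ?_, fun n => by rw [hsplit, hPc, (hν n).2]⟩
  simpa [c] using hclim.sub (((WeakDual.eval_continuous f).tendsto μ).comp hlim)

/-- Main theorem (Theorem `Kifer-implies-approx`): if there is a dense vector subspace
`V ⊆ C(Ω, ℝ)` such that `f + g` has a unique equilibrium state for every `g ∈ V`, then every
`μ ∈ M = M^τ(Ω)` is the weak* limit of a sequence `μ_n` of (unique) equilibrium states of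
functions `f + g_n` with `g_n ∈ V`, with moreover `h(μ_n) → h(μ)`. -/
theorem stmt13 {Ω : Type} [TopologicalSpace Ω] [CompactSpace Ω]
    [TopologicalSpace.MetrizableSpace Ω] [Nonempty Ω]
    (M : Set (WeakDual ℝ C(Ω, ℝ))) (hne : M.Nonempty) (hcomp : IsCompact M)
    (hconv : Convex ℝ M)
    (hprob : ∀ μ ∈ M, μ (1 : C(Ω, ℝ)) = 1 ∧ ∀ g : C(Ω, ℝ), (∀ ω, 0 ≤ g ω) → 0 ≤ μ g)
    (h : WeakDual ℝ C(Ω, ℝ) → ℝ)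
    (hbdd : ∃ C : ℝ, ∀ μ ∈ M, |h μ| ≤ C)
    (haff : ∀ μ ∈ M, ∀ ν ∈ M, ∀ a b : ℝ, 0 ≤ a → 0 ≤ b → a + b = 1 →
      h (a • μ + b • ν) = a * h μ + b * h ν)
    (husc : UpperSemicontinuousOn h M)
    (P : C(Ω, ℝ) → ℝ)
    (hP : ∀ g : C(Ω, ℝ), P g = sSup ((fun μ : WeakDual ℝ C(Ω, ℝ) => μ g + h μ) '' M))
    (f : C(Ω, ℝ))
    (V : Submodule ℝ C(Ω, ℝ)) (hV : Dense (V : Set C(Ω, ℝ)))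
    (huniq : ∀ g ∈ V, ∃! μ : WeakDual ℝ C(Ω, ℝ),
      μ ∈ M ∧ μ (f + g) + h μ = P (f + g)) :
    ∀ μ ∈ M, ∃ (μn : ℕ → WeakDual ℝ C(Ω, ℝ)) (gn : ℕ → C(Ω, ℝ)),
      (∀ n, gn n ∈ V) ∧ (∀ n, μn n ∈ M) ∧
      Tendsto μn atTop (𝓝 μ) ∧
      Tendsto (fun n => h (μn n)) atTop (𝓝 (h μ)) ∧
      ∀ n, μn n (f + gn n) + h (μn n) = P (f + gn n) :=
  stmt13_general M hcomp hconv hprob h haff husc P hP f V hV huniq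
end
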